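/- arXiv:2411.03828 — 12 statements merged into one kernel-verified Lean document; each statement's English description precedes it below -/
import Mathlib

section
/- Let β > 0 and let F be a function on an interval I ⊆ ℝ with 0 ≤ F(x) ≤ 1, and define G_{β,1}(x) = β F(x)/(1 + (β − 1) F(x)). If F is concave on I and β ≥ 1, then G_{β,1} is concave on I. If F is convex on I and 0 < β ≤ 1, then G_{β,1} is convex on I. -/
/-!
`G_{β,1} = φ ∘ F` with `φ t = β t / (1 + (β - 1) t)`. On `[0, 1]` the denominator
`D(t) = 1 + (β - 1) t` is positive, `φ` is increasing, and
`φ (a s + b t) - (a φ s + b φ t) = (β - 1) β a b (s - t)² / (D(a s + b t) D(s) D(t))`,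
so `φ` is concave for `β ≥ 1` and convex for `β ≤ 1`. A nondecreasing concave (convex) function
of a concave (convex) function is concave (convex).
-/

open Set

section Composition

variable {𝕜 E F G : Type*} [Semiring 𝕜] [PartialOrder 𝕜] [AddCommMonoid E]
  [AddCommMonoid F] [PartialOrder F] [AddCommMonoid G] [PartialOrder G]
  [SMul 𝕜 E] [SMul 𝕜 F] [SMul 𝕜 G] {s : Set E} {t : Set F} {f : E → F} {g : F → G}

-- Mathlib's `ConcaveOn.comp` wants `g` concave on `f '' s`, which need not be convex: a concave
-- function on an interval may jump at an endpoint.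
theorem ConcaveOn.comp_of_mapsTo (hg : ConcaveOn 𝕜 t g) (hf : ConcaveOn 𝕜 s f)
    (hg' : MonotoneOn g t) (hst : MapsTo f s t) : ConcaveOn 𝕜 s (g ∘ f) :=
  ⟨hf.1, fun _ hx _ hy _ _ ha hb hab =>
    (hg.2 (hst hx) (hst hy) ha hb hab).trans <|
      hg' (hg.1 (hst hx) (hst hy) ha hb hab) (hst <| hf.1 hx hy ha hb hab) <|
        hf.2 hx hy ha hb hab⟩

theorem ConvexOn.comp_of_mapsTo (hg : ConvexOn 𝕜 t g) (hf : ConvexOn 𝕜 s f)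
    (hg' : MonotoneOn g t) (hst : MapsTo f s t) : ConvexOn 𝕜 s (g ∘ f) :=
  ⟨hf.1, fun _ hx _ hy _ _ ha hb hab =>
    (hg' (hst <| hf.1 hx hy ha hb hab) (hg.1 (hst hx) (hst hy) ha hb hab) <|
        hf.2 hx hy ha hb hab).trans <|
      hg.2 (hst hx) (hst hy) ha hb hab⟩

end Composition

section MarshallOlkin

noncomputable def marshallOlkin (β t : ℝ) : ℝ := β * t / (1 + (β - 1) * t)

variable {β : ℝ}

theorem marshallOlkin_denom_pos (hβ : 0 < β) {t : ℝ} (ht : t ∈ Icc (0 : ℝ) 1) :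
    0 < 1 + (β - 1) * t := by
  obtain ⟨ht0, ht1⟩ := ht
  nlinarith [mul_nonneg hβ.le ht0]

theorem monotoneOn_marshallOlkin (hβ : 0 < β) : MonotoneOn (marshallOlkin β) (Icc 0 1) := by
  intro s hs t ht hst
  rw [marshallOlkin, marshallOlkin,
    div_le_div_iff₀ (marshallOlkin_denom_pos hβ hs) (marshallOlkin_denom_pos hβ ht)]
  nlinarith

theorem marshallOlkin_combo_sub_combo_marshallOlkin {s t a b : ℝ}
    (hDs : 1 + (β - 1) * s ≠ 0) (hDt : 1 + (β - 1) * t ≠ 0)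
    (hDu : 1 + (β - 1) * (a * s + b * t) ≠ 0) (hab : a + b = 1) :
    marshallOlkin β (a * s + b * t) - (a * marshallOlkin β s + b * marshallOlkin β t) =
      (β - 1) * (β * a * b * (s - t) ^ 2 /
        ((1 + (β - 1) * (a * s + b * t)) * (1 + (β - 1) * s) * (1 + (β - 1) * t))) := by
  obtain rfl : b = 1 - a := by linarith
  rw [marshallOlkin, marshallOlkin, marshallOlkin, mul_div_assoc', mul_div_assoc',
    mul_div_assoc', div_add_div _ _ hDs hDt, div_sub_div _ _ hDu (mul_ne_zero hDs hDt),
    div_eq_div_iff (mul_ne_zero hDu (mul_ne_zero hDs hDt))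
      (mul_ne_zero (mul_ne_zero hDu hDs) hDt)]
  ring

theorem exists_nonneg_marshallOlkin_combo_sub_combo_eq_mul (hβ : 0 < β) {s t a b : ℝ}
    (hs : s ∈ Icc (0 : ℝ) 1) (ht : t ∈ Icc (0 : ℝ) 1) (ha : 0 ≤ a) (hb : 0 ≤ b) (hab : a + b = 1) :
    ∃ c, 0 ≤ c ∧
      marshallOlkin β (a * s + b * t) - (a * marshallOlkin β s + b * marshallOlkin β t) =
        (β - 1) * c := by
  have hu : a * s + b * t ∈ Icc (0 : ℝ) 1 := convex_Icc 0 1 hs ht ha hb hab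
  have hDs := marshallOlkin_denom_pos hβ hs
  have hDt := marshallOlkin_denom_pos hβ ht
  have hDu := marshallOlkin_denom_pos hβ hu
  exact ⟨_, by positivity, marshallOlkin_combo_sub_combo_marshallOlkin hDs.ne' hDt.ne' hDu.ne' hab⟩

theorem concaveOn_marshallOlkin (hβ : 1 ≤ β) : ConcaveOn ℝ (Icc 0 1) (marshallOlkin β) := by
  refine ⟨convex_Icc 0 1, fun s hs t ht a b ha hb hab => ?_⟩
  obtain ⟨c, hc, hdev⟩ :=
    exists_nonneg_marshallOlkin_combo_sub_combo_eq_mul (one_pos.trans_le hβ) hs ht ha hb hab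
  simp only [smul_eq_mul]
  nlinarith

theorem convexOn_marshallOlkin (hβ0 : 0 < β) (hβ1 : β ≤ 1) :
    ConvexOn ℝ (Icc 0 1) (marshallOlkin β) := by
  refine ⟨convex_Icc 0 1, fun s hs t ht a b ha hb hab => ?_⟩
  obtain ⟨c, hc, hdev⟩ :=
    exists_nonneg_marshallOlkin_combo_sub_combo_eq_mul hβ0 hs ht ha hb hab
  simp only [smul_eq_mul]
  nlinarith

end MarshallOlkin

/-- For `β > 0` and `F` with values in `[0,1]` on `I`, let
`G_{β,1}(x) = β F(x) / (1 + (β-1) F(x))`.  If `F` is concave on `I` and `β ≥ 1`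
then `G_{β,1}` is concave on `I`; if `F` is convex on `I` and `β ≤ 1` then
`G_{β,1}` is convex on `I`. -/
theorem oMO_convexity_theta_one
    (β : ℝ) (hβ : 0 < β) (I : Set ℝ) (F : ℝ → ℝ)
    (hF : ∀ x ∈ I, 0 ≤ F x ∧ F x ≤ 1) :
    (ConcaveOn ℝ I F → 1 ≤ β →
      ConcaveOn ℝ I (fun x => β * F x / (1 + (β - 1) * F x))) ∧
    (ConvexOn ℝ I F → β ≤ 1 →
      ConvexOn ℝ I (fun x => β * F x / (1 + (β - 1) * F x))) :=
  ⟨fun hFc hβ1 =>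
    (concaveOn_marshallOlkin hβ1).comp_of_mapsTo hFc (monotoneOn_marshallOlkin hβ) hF,
   fun hFc hβ1 =>
    (convexOn_marshallOlkin hβ hβ1).comp_of_mapsTo hFc (monotoneOn_marshallOlkin hβ) hF⟩
end

section
/- Let F : [0,∞) → [0,1) be a nondecreasing distribution function and let h_F : [0,∞) → [0,∞) be its hazard rate. The hazard rate of the oMO distribution G_{β,1} is h_{G_{β,1}}(x) = β h_F(x)/(1 + (β − 1) F(x)). If h_F is nondecreasing and 0 < β ≤ 1, then h_{G_{β,1}} is nondecreasing on [0,∞) (G_{β,1} ∈ IHR). If h_F is nonincreasing and β ≥ 1, then h_{G_{β,1}} is nonincreasing on [0,∞) (G_{β,1} ∈ DHR). -/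
/-!
Write the oMO hazard rate as `β h_F / D` with `D = 1 + (β - 1) F = (1 - F) + β F`, which is
positive because `0 ≤ F < 1` and `β > 0`. As `F` is nondecreasing, `D` is nonincreasing for
`β ≤ 1` and nondecreasing for `β ≥ 1`. A nonnegative nondecreasing numerator over a positive
nonincreasing denominator is nondecreasing, and dually, which gives both cases.
-/

section

variable {α 𝕜 : Type*} [Preorder α] [Field 𝕜] [LinearOrder 𝕜] [IsStrictOrderedRing 𝕜]
  {f g : α → 𝕜} {s : Set α}

theorem MonotoneOn.div_of_antitoneOn (hf : MonotoneOn f s) (hg : AntitoneOn g s)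
    (hf₀ : ∀ x ∈ s, 0 ≤ f x) (hg₀ : ∀ x ∈ s, 0 < g x) :
    MonotoneOn (fun x => f x / g x) s :=
  fun _ hx _ hy hxy => div_le_div₀ (hf₀ _ hy) (hf hx hy hxy) (hg₀ _ hy) (hg hx hy hxy)

theorem AntitoneOn.div_of_monotoneOn (hf : AntitoneOn f s) (hg : MonotoneOn g s)
    (hf₀ : ∀ x ∈ s, 0 ≤ f x) (hg₀ : ∀ x ∈ s, 0 < g x) :
    AntitoneOn (fun x => f x / g x) s :=
  fun _ hx _ hy hxy => div_le_div₀ (hf₀ _ hx) (hf hx hy hxy) (hg₀ _ hx) (hg hx hy hxy)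

theorem one_add_sub_one_mul_pos {β t : 𝕜} (hβ : 0 < β) (ht₀ : 0 ≤ t) (ht₁ : t < 1) :
    0 < 1 + (β - 1) * t := by
  have h : 1 + (β - 1) * t = (1 - t) + β * t := by ring
  rw [h]
  exact add_pos_of_pos_of_nonneg (sub_pos.2 ht₁) (mul_nonneg hβ.le ht₀)

end

/-- If `F` is a nondecreasing distribution function on `[0,∞)`
with hazard rate `h_F`, then the hazard rate of the oMO distribution
`G_{β,1}`, namely `x ↦ β h_F(x) / (1 + (β-1) F(x))`, is nondecreasing whenever
`h_F` is nondecreasing and `0 < β ≤ 1`, and nonincreasing whenever `h_F` is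
nonincreasing and `β ≥ 1`. -/
theorem oMO_hazard_monotonicity_theta_one
    (β : ℝ) (hβ : 0 < β) (F hF : ℝ → ℝ)
    (hFmono : MonotoneOn F (Set.Ici 0))
    (hFrange : ∀ x ∈ Set.Ici (0 : ℝ), 0 ≤ F x ∧ F x < 1)
    (hhF : ∀ x ∈ Set.Ici (0 : ℝ), 0 ≤ hF x) :
    (MonotoneOn hF (Set.Ici 0) → β ≤ 1 →
      MonotoneOn (fun x => β * hF x / (1 + (β - 1) * F x)) (Set.Ici 0)) ∧
    (AntitoneOn hF (Set.Ici 0) → 1 ≤ β →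
      AntitoneOn (fun x => β * hF x / (1 + (β - 1) * F x)) (Set.Ici 0)) := by
  have hnum : ∀ x ∈ Set.Ici (0 : ℝ), 0 ≤ β * hF x := fun x hx => mul_nonneg hβ.le (hhF x hx)
  have hden : ∀ x ∈ Set.Ici (0 : ℝ), 0 < 1 + (β - 1) * F x := fun x hx =>
    one_add_sub_one_mul_pos hβ (hFrange x hx).1 (hFrange x hx).2
  constructor
  · intro hmono hβ₁
    refine MonotoneOn.div_of_antitoneOn (fun x hx y hy hxy => ?_) (fun x hx y hy hxy => ?_)
      hnum hden
    · exact mul_le_mul_of_nonneg_left (hmono hx hy hxy) hβ.le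
    · exact add_le_add_right (mul_le_mul_of_nonpos_left (hFmono hx hy hxy) (sub_nonpos.2 hβ₁)) 1
  · intro hanti hβ₁
    refine AntitoneOn.div_of_monotoneOn (fun x hx y hy hxy => ?_) (fun x hx y hy hxy => ?_)
      hnum hden
    · exact mul_le_mul_of_nonneg_left (hanti hx hy hxy) hβ.le
    · exact add_le_add_right (mul_le_mul_of_nonneg_left (hFmono hx hy hxy) (sub_nonneg.2 hβ₁)) 1
end

section
/- Let F : ℝ → [0,1) be a distribution function with density f ≥ 0 and 0 < F(x) < 1 on the region considered, let β > 0, and let G_{β,1}(x) = βF(x)/(1 + (β − 1)F(x)) with survival Ḡ_{β,1}(x) = (1 − F(x))/(1 + (β − 1)F(x)) and density g_{β,1}(x) = βf(x)/(1 + (β − 1)F(x))². If 0 < β ≤ 1, then for every x: β·f(x)/(1 − F(x)) ≤ g_{β,1}(x)/Ḡ_{β,1}(x) ≤ f(x)/(1 − F(x)), g_{β,1}(x)/G_{β,1}(x) ≥ f(x)/F(x), and Ḡ_{β,1}(x) ≥ 1 − F(x). If β ≥ 1, then for every x: f(x)/(1 − F(x)) ≤ g_{β,1}(x)/Ḡ_{β,1}(x)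 ≤ β·f(x)/(1 − F(x)), g_{β,1}(x)/G_{β,1}(x) ≤ f(x)/F(x), and Ḡ_{β,1}(x) ≤ 1 − F(x). -/
/-!
Writing `D = 1 + (β - 1) F`, the hazard rate, reversed hazard rate and survival function of
`G_{β,1}` are those of `F` multiplied by `β / D`, `1 / D` and `1 / D` respectively. Since `D` is a
convex combination of `1` and `β`, it lies between them, which fixes the side of `1` on which
each of these factors lies.
-/

section OMODenominator

variable {β p : ℝ}

theorem le_omo_denom_of_le_one (hβ1 : β ≤ 1) (hp1 : p ≤ 1) : β ≤ 1 + (β - 1) * p := by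
  nlinarith

theorem omo_denom_le_one (hβ1 : β ≤ 1) (hp0 : 0 ≤ p) : 1 + (β - 1) * p ≤ 1 := by
  nlinarith

theorem one_le_omo_denom (hβ1 : 1 ≤ β) (hp0 : 0 ≤ p) : 1 ≤ 1 + (β - 1) * p := by
  nlinarith

theorem omo_denom_le_of_one_le (hβ1 : 1 ≤ β) (hp1 : p ≤ 1) : 1 + (β - 1) * p ≤ β := by
  nlinarith

theorem omo_denom_pos (hβ : 0 < β) (hp0 : 0 ≤ p) (hp1 : p ≤ 1) : 0 < 1 + (β - 1) * p := by
  rcases le_total β 1 with hβ1 | hβ1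
  · exact hβ.trans_le (le_omo_denom_of_le_one hβ1 hp1)
  · exact one_pos.trans_le (one_le_omo_denom hβ1 hp0)

end OMODenominator

section FieldIdentities

variable {K : Type*} [Field K]

theorem mul_div_sq_div_div_eq (c a b : K) {d : K} (hd : d ≠ 0) :
    c * a / d ^ 2 / (b / d) = c / d * (a / b) := by
  field_simp

theorem mul_div_sq_div_mul_div_eq (a b : K) {c d : K} (hc : c ≠ 0) (hd : d ≠ 0) :
    c * a / d ^ 2 / (c * b / d) = a / b / d := by
  field_simp

end FieldIdentities

/-- Hazard rate, reversed hazard rate and survival comparisons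
between a baseline `F` (density `f`, `0 < F < 1`) and the oMO distribution
`G_{β,1}(x) = βF(x)/(1+(β-1)F(x))`, with survival
`Ḡ(x) = (1-F(x))/(1+(β-1)F(x))` and density `g(x) = βf(x)/(1+(β-1)F(x))²`. -/
theorem oMO_hazard_bounds_theta_one
    (F f : ℝ → ℝ) (hFrange : ∀ x, 0 < F x ∧ F x < 1)
    (hf : ∀ x, 0 ≤ f x) (β : ℝ) (hβ : 0 < β) :
    (β ≤ 1 → ∀ x,
      β * (f x / (1 - F x)) ≤
        (β * f x / (1 + (β - 1) * F x) ^ 2) /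
          ((1 - F x) / (1 + (β - 1) * F x)) ∧
      (β * f x / (1 + (β - 1) * F x) ^ 2) /
          ((1 - F x) / (1 + (β - 1) * F x)) ≤ f x / (1 - F x) ∧
      f x / F x ≤
        (β * f x / (1 + (β - 1) * F x) ^ 2) /
          (β * F x / (1 + (β - 1) * F x)) ∧
      1 - F x ≤ (1 - F x) / (1 + (β - 1) * F x)) ∧
    (1 ≤ β → ∀ x,
      f x / (1 - F x) ≤
        (β * f x / (1 + (β - 1) * F x) ^ 2) /
          ((1 - F x) / (1 + (β - 1) * F x)) ∧
      (β * f x / (1 + (β - 1) * F x) ^ 2) /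
          ((1 - F x) / (1 + (β - 1) * F x)) ≤ β * (f x / (1 - F x)) ∧
      (β * f x / (1 + (β - 1) * F x) ^ 2) /
          (β * F x / (1 + (β - 1) * F x)) ≤ f x / F x ∧
      (1 - F x) / (1 + (β - 1) * F x) ≤ 1 - F x) := by
  refine ⟨fun hβ1 x => ?_, fun hβ1 x => ?_⟩
  all_goals
    obtain ⟨hF0, hF1⟩ := hFrange x
    have hD := omo_denom_pos hβ hF0.le hF1.le
    have hS : 0 ≤ 1 - F x := sub_nonneg.2 hF1.le
    have hH : 0 ≤ f x / (1 - F x) := div_nonneg (hf x) hS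
    have hR : 0 ≤ f x / F x := div_nonneg (hf x) hF0.le
    rw [mul_div_sq_div_div_eq _ _ _ hD.ne', mul_div_sq_div_mul_div_eq _ _ hβ.ne' hD.ne']
  · have hD1 := omo_denom_le_one hβ1 hF0.le
    exact ⟨mul_le_mul_of_nonneg_right (le_div_self hβ.le hD hD1) hH,
      mul_le_of_le_one_left hH ((div_le_one hD).2 (le_omo_denom_of_le_one hβ1 hF1.le)),
      le_div_self hR hD hD1, le_div_self hS hD hD1⟩
  · have hD1 := one_le_omo_denom hβ1 hF0.le
    exact ⟨le_mul_of_one_le_left hH ((one_le_div hD).2 (omo_denom_le_of_one_le hβ1 hF1.le)),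
      mul_le_mul_of_nonneg_right (div_le_self hβ.le hD1) hH,
      div_le_self hR hD1, div_le_self hS hD1⟩
end

section
/- Let θ > 0 with θ ≠ 1 and β > 0, and let F : [0,∞) → [0,1) be a continuous, strictly increasing distribution function with F(0) = 0 and F(x) → 1 as x → ∞ (so F maps [0,∞) onto [0,1)). Define the oMO survival function Ḡ_{β,θ}(x) = (1 − F(x))^θ/(β F(x)^θ + (1 − F(x))^θ). Then F and G_{β,θ} are not comparable in the usual stochastic order: there exist x₁, x₂ > 0 such that Ḡ_{β,θ}(x₁) > 1 − F(x₁) and Ḡ_{β,θ}(x₂) < 1 − F(x₂). -/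
open Real Filter Set

/-!
Writing `r = F/(1-F)` for the odds of the baseline, one has `1 - F = 1/(1 + r)` while
`Ḡ_{β,θ} = 1/(1 + β r^θ)`, so `Ḡ_{β,θ}` lies above or below `1 - F` according as `β r^θ` lies
below or above `r`. For `θ ≠ 1` the ratio `β r^θ / r = β r^(θ-1)` takes every positive value,
and `F` takes every value in `(0,1)` on `(0,∞)`, so both signs occur.
-/

theorem intermediate_value_Ioi_of_tendsto_nhds {α δ : Type*} [ConditionallyCompleteLinearOrder α]
    [TopologicalSpace α] [OrderTopology α] [DenselyOrdered α] [Nonempty α]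
    [LinearOrder δ] [TopologicalSpace δ] [OrderClosedTopology δ]
    {a : α} {f : α → δ} (hf : ContinuousOn f (Ici a)) {v : δ} (hv : Tendsto f atTop (nhds v)) :
    Ioo (f a) v ⊆ f '' Ioi a := by
  intro y hy
  obtain ⟨x, hx, rfl⟩ := isPreconnected_Ici.intermediate_value_Ico self_mem_Ici
    (le_principal_iff.mpr (Ici_mem_atTop a)) hf hv (Ioo_subset_Ico_self hy)
  exact ⟨x, lt_of_le_of_ne hx (by rintro rfl; exact hy.1.false), rfl⟩

theorem one_sub_div_one_add {r : ℝ} (hr : 1 + r ≠ 0) : 1 - r / (1 + r) = 1 / (1 + r) := by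
  field_simp
  ring

theorem oMO_survival_of_odds (θ β : ℝ) {r : ℝ} (hr : 0 ≤ r) :
    (1 - r / (1 + r)) ^ θ / (β * (r / (1 + r)) ^ θ + (1 - r / (1 + r)) ^ θ)
      = 1 / (1 + β * r ^ θ) := by
  rw [one_sub_div_one_add (by positivity), div_eq_mul_one_div r, mul_rpow hr (by positivity)]
  field_simp
  ring

theorem exists_pos_mul_rpow_eq_mul {θ β c : ℝ} (hθ : θ ≠ 1) (hβ : 0 < β) (hc : 0 < c) :
    ∃ r > 0, β * r ^ θ = c * r := by
  have hθ' : θ - 1 ≠ 0 := sub_ne_zero.mpr hθ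
  set r := (c / β) ^ (θ - 1)⁻¹
  have hr : 0 < r := rpow_pos_of_pos (div_pos hc hβ) _
  have hr_pow : r ^ (θ - 1) = c / β := by
    rw [← rpow_mul (div_pos hc hβ).le, inv_mul_cancel₀ hθ', rpow_one]
  refine ⟨r, hr, ?_⟩
  calc β * r ^ θ = β * (r ^ (θ - 1) * r) := by rw [← rpow_add_one hr.ne', sub_add_cancel]
    _ = c * r := by rw [hr_pow]; field_simp

theorem oMO_noncomparable_usual_stochastic_order_general
    (θ β : ℝ) (hθ1 : θ ≠ 1) (hβ : 0 < β)
    (F : ℝ → ℝ)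
    (hcont : ContinuousOn F (Set.Ici 0))
    (hF0 : F 0 = 0)
    (hlim : Tendsto F atTop (nhds 1)) :
    ∃ x₁ > (0 : ℝ), ∃ x₂ > (0 : ℝ),
      1 - F x₁ < (1 - F x₁) ^ θ / (β * F x₁ ^ θ + (1 - F x₁) ^ θ) ∧
      (1 - F x₂) ^ θ / (β * F x₂ ^ θ + (1 - F x₂) ^ θ) < 1 - F x₂ := by
  have odds_point : ∀ c > 0, ∃ x > (0 : ℝ), ∃ r > (0 : ℝ), 1 - F x = 1 / (1 + r) ∧
      (1 - F x) ^ θ / (β * F x ^ θ + (1 - F x) ^ θ) = 1 / (1 + c * r) := by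
    intro c hc
    obtain ⟨r, hr, hβr⟩ := exists_pos_mul_rpow_eq_mul hθ1 hβ hc
    have hu : r / (1 + r) ∈ Ioo (F 0) 1 := by
      rw [hF0]
      exact ⟨by positivity, (div_lt_one (by positivity)).mpr (by linarith)⟩
    obtain ⟨x, hx, hFx⟩ := intermediate_value_Ioi_of_tendsto_nhds hcont hlim hu
    refine ⟨x, hx, r, hr, ?_, ?_⟩
    · rw [hFx, one_sub_div_one_add (by positivity)]
    · rw [hFx, oMO_survival_of_odds θ β hr.le, hβr]
  obtain ⟨x₁, hx₁, r₁, hr₁, hF₁, hG₁⟩ := odds_point (1 / 2) (by norm_num)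
  obtain ⟨x₂, hx₂, r₂, hr₂, hF₂, hG₂⟩ := odds_point 2 (by norm_num)
  refine ⟨x₁, hx₁, x₂, hx₂, ?_, ?_⟩
  · rw [hG₁, hF₁]
    exact one_div_lt_one_div_of_lt (by positivity) (by linarith)
  · rw [hG₂, hF₂]
    exact one_div_lt_one_div_of_lt (by positivity) (by linarith)

/-- For `θ ≠ 1`, the baseline `F` and the oMO distribution
`G_{β,θ}` (with survival `Ḡ_{β,θ}(x) = (1-F(x))^θ/(βF(x)^θ+(1-F(x))^θ)`) are
not comparable in the usual stochastic order: the survival difference takes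
both signs. -/
theorem oMO_noncomparable_usual_stochastic_order
    (θ β : ℝ) (hθ : 0 < θ) (hθ1 : θ ≠ 1) (hβ : 0 < β)
    (F : ℝ → ℝ)
    (hcont : ContinuousOn F (Set.Ici 0))
    (hmono : StrictMonoOn F (Set.Ici 0))
    (hF0 : F 0 = 0)
    (hlim : Tendsto F atTop (nhds 1))
    (hrange : ∀ x ∈ Set.Ici (0 : ℝ), 0 ≤ F x ∧ F x < 1) :
    ∃ x₁ > (0 : ℝ), ∃ x₂ > (0 : ℝ),
      1 - F x₁ < (1 - F x₁) ^ θ / (β * F x₁ ^ θ + (1 - F x₁) ^ θ) ∧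
      (1 - F x₂) ^ θ / (β * F x₂ ^ θ + (1 - F x₂) ^ θ) < 1 - F x₂ :=
  oMO_noncomparable_usual_stochastic_order_general θ β hθ1 hβ F hcont hF0 hlim
end

section
/- Let α ≥ 0, β, θ > 0, p ∈ (0,1], and let F be a baseline distribution function with 0 ≤ F(x) < 1 and odds function Λ_F(x) = F(x)/(1 − F(x)). With Ḡ_{α,β,θ}(x) = 1/(1 + β((α + Λ_F(x))^θ − α^θ)) and G_{α,β,θ} = 1 − Ḡ_{α,β,θ}, the following geometric-stability identities hold for every x: ∑_{n=1}^∞ p(1 − p)^{n−1} (Ḡ_{α,β,θ}(x))ⁿ = Ḡ_{α,β/p,θ}(x) and ∑_{n=1}^∞ p(1 − p)^{n−1} (G_{α,β,θ}(x))ⁿ = G_{α,βp,θ}(x). (Probabilistically: the minimum, respectively maximum, of a Geometric(p) number of i.i.d. G_{α,β,θ}-distributed variables follows G_{α,β/p,θ}, respectively G_{α,βp,θ}.) -/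
/-!
Writing `c = β((α + Λ_F(x))^θ - α^θ) ≥ 0`, both sums are geometric series,
`∑ p(1-p)ⁿ uⁿ⁺¹ = pu / (1 - (1-p)u)`, and the two Möbius transformations
`u = 1/(1+c) ↦ 1/(1+c/p)` and `u = c/(1+c) ↦ 1 - 1/(1+cp)` do the rest.
-/

theorem tsum_geometric_mixture_pow_succ {K : Type*} [NormedField K] {p u : K}
    (h : ‖(1 - p) * u‖ < 1) :
    ∑' n : ℕ, p * (1 - p) ^ n * u ^ (n + 1) = p * u / (1 - (1 - p) * u) := by
  calc ∑' n : ℕ, p * (1 - p) ^ n * u ^ (n + 1)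
      = ∑' n : ℕ, p * u * ((1 - p) * u) ^ n :=
        tsum_congr fun n => by rw [mul_pow, pow_succ]; ring
    _ = p * u / (1 - (1 - p) * u) := by
        rw [tsum_mul_left, tsum_geometric_of_norm_lt_one h, div_eq_mul_inv]

theorem abs_one_sub_mul_lt_one {p u : ℝ} (hp : p ∈ Set.Ioc (0 : ℝ) 1)
    (hu₀ : 0 ≤ u) (hu₁ : u ≤ 1) : |(1 - p) * u| < 1 := by
  obtain ⟨hp₀, hp₁⟩ := hp
  rw [abs_of_nonneg (mul_nonneg (by linarith) hu₀)]
  nlinarith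

theorem tsum_geometric_mixture_survival {c p : ℝ} (hc : 0 ≤ c) (hp : p ∈ Set.Ioc (0 : ℝ) 1) :
    ∑' n : ℕ, p * (1 - p) ^ n * (1 / (1 + c)) ^ (n + 1) = 1 / (1 + c / p) := by
  have hp₀ : 0 < p := hp.1
  rw [tsum_geometric_mixture_pow_succ (abs_one_sub_mul_lt_one hp (by positivity)
    ((div_le_one (by positivity)).2 (by linarith)))]
  have hden : 1 - (1 - p) * (1 / (1 + c)) = (p + c) / (1 + c) := by field_simp; ring
  have : 0 < p + c := by positivity
  rw [hden]
  field_simp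

theorem tsum_geometric_mixture_cdf {c p : ℝ} (hc : 0 ≤ c) (hp : p ∈ Set.Ioc (0 : ℝ) 1) :
    ∑' n : ℕ, p * (1 - p) ^ n * (1 - 1 / (1 + c)) ^ (n + 1) = 1 - 1 / (1 + c * p) := by
  have hp₀ : 0 < p := hp.1
  have hu : 1 - 1 / (1 + c) = c / (1 + c) := by field_simp; ring
  rw [hu, tsum_geometric_mixture_pow_succ (abs_one_sub_mul_lt_one hp (by positivity)
    ((div_le_one (by positivity)).2 (by linarith)))]
  have hden : 1 - (1 - p) * (c / (1 + c)) = (1 + c * p) / (1 + c) := by field_simp; ring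
  have : 0 < 1 + c * p := by positivity
  rw [hden]
  field_simp
  ring

/-- Geometric extreme stability of the d-oMO family.  With
`Ḡ_{α,β,θ}(x) = 1/(1 + β((α + Λ_F(x))^θ - α^θ))`, the geometric mixture of
powers of the survival function is the survival function with `β/p`, and the
geometric mixture of powers of the distribution function is the distribution
function with `βp`. -/
theorem doMO_geometric_extreme_stability
    (α β θ p : ℝ) (hα : 0 ≤ α) (hβ : 0 < β) (hθ : 0 < θ)
    (hp : p ∈ Set.Ioc (0 : ℝ) 1)
    (F : ℝ → ℝ) (hrange : ∀ x, 0 ≤ F x ∧ F x < 1) :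
    ∀ x : ℝ,
      (∑' n : ℕ, p * (1 - p) ^ n *
          (1 / (1 + β * ((α + F x / (1 - F x)) ^ θ - α ^ θ))) ^ (n + 1)) =
        1 / (1 + (β / p) * ((α + F x / (1 - F x)) ^ θ - α ^ θ)) ∧
      (∑' n : ℕ, p * (1 - p) ^ n *
          (1 - 1 / (1 + β * ((α + F x / (1 - F x)) ^ θ - α ^ θ))) ^ (n + 1)) =
        1 - 1 / (1 + (β * p) * ((α + F x / (1 - F x)) ^ θ - α ^ θ)) := by
  intro x
  obtain ⟨hF₀, hF₁⟩ := hrange x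
  have hodds : 0 ≤ F x / (1 - F x) := div_nonneg hF₀ (by linarith)
  have hdist : 0 ≤ (α + F x / (1 - F x)) ^ θ - α ^ θ :=
    sub_nonneg.2 (Real.rpow_le_rpow hα (le_add_of_nonneg_right hodds) hθ.le)
  have hc : 0 ≤ β * ((α + F x / (1 - F x)) ^ θ - α ^ θ) := mul_nonneg hβ.le hdist
  rw [div_mul_eq_mul_div, mul_right_comm β p]
  exact ⟨tsum_geometric_mixture_survival hc hp, tsum_geometric_mixture_cdf hc hp⟩
end

section
/- Let F be a baseline distribution with nonnegative nondecreasing odds function Λ_F and hazard rate h_F ≥ 0, and for α ≥ 0, β, θ > 0 let the hazard rate of the d-oMO distribution G_{α,β,θ} be h_{G_{α,β,θ}}(x) = βθ h_F(x) T_{α,β,θ}(Λ_F(x)), where T_{α,β,θ}(t) = (α + t)^{θ−1}(t + 1)/(1 + β((α + t)^θ − α^θ)) for t ≥ 0. If α = 1 or θ = 1, 0 < β ≤ 1, and h_F is nondecreasing, then h_{G_{α,β,θ}} is nondecreasing (G_{α,β,θ} ∈ IHR). If α = 1 or θ = 1, β ≥ 1, and h_F is nonincreasing, then h_{G_{α,β,θ}}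 is nonincreasing (G_{α,β,θ} ∈ DHR). -/
/-!
In both special cases `T_{α,β,θ}(t) = m_β((1 + t)^θ)` with `m_β(u) = u / (1 + β (u - 1))`:
for `α = 1` because `(1 + t)^{θ-1} (t + 1) = (1 + t)^θ`, and for `θ = 1` because the factor
`(α + t)^{θ-1}` is `1` and `(α + t)^θ - α^θ = t`. Cross-multiplying,
`m_β(v) - m_β(u)` has the sign of `(1 - β)(v - u)` on `u, v ≥ 1`, so `T` is nondecreasing
for `β ≤ 1` and nonincreasing for `β ≥ 1`. The hazard rate `βθ h_F T(Λ_F)` is then a product of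
two nonnegative functions that are monotone in the same direction.
-/

open Real Set

noncomputable def doMOT (α β θ t : ℝ) : ℝ :=
  (α + t) ^ (θ - 1) * (t + 1) / (1 + β * ((α + t) ^ θ - α ^ θ))

noncomputable def doMOMobius (β u : ℝ) : ℝ :=
  u / (1 + β * (u - 1))

section Mobius

variable {β : ℝ}

lemma one_le_one_add_mul_sub_one {u : ℝ} (hβ : 0 ≤ β) (hu : 1 ≤ u) :
    1 ≤ 1 + β * (u - 1) :=
  le_add_of_nonneg_right (mul_nonneg hβ (sub_nonneg.2 hu))

lemma doMOMobius_nonneg {u : ℝ} (hβ : 0 ≤ β) (hu : 1 ≤ u) : 0 ≤ doMOMobius β u :=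
  div_nonneg (by linarith) (by linarith [one_le_one_add_mul_sub_one hβ hu])

lemma monotoneOn_doMOMobius (hβ : 0 ≤ β) (hβ1 : β ≤ 1) :
    MonotoneOn (doMOMobius β) (Ici 1) := by
  intro u hu v hv huv
  have hDu := one_le_one_add_mul_sub_one hβ hu
  have hDv := one_le_one_add_mul_sub_one hβ hv
  rw [doMOMobius, doMOMobius, div_le_div_iff₀ (by linarith) (by linarith)]
  nlinarith [mul_nonneg (sub_nonneg.2 hβ1) (sub_nonneg.2 huv)]

lemma antitoneOn_doMOMobius (hβ : 1 ≤ β) : AntitoneOn (doMOMobius β) (Ici 1) := by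
  intro u hu v hv huv
  have hDu := one_le_one_add_mul_sub_one (zero_le_one.trans hβ) hu
  have hDv := one_le_one_add_mul_sub_one (zero_le_one.trans hβ) hv
  rw [doMOMobius, doMOMobius, div_le_div_iff₀ (by linarith) (by linarith)]
  nlinarith [mul_nonneg (sub_nonneg.2 hβ) (sub_nonneg.2 huv)]

end Mobius

section OneAddRpow

variable {θ : ℝ}

lemma monotoneOn_one_add_rpow (hθ : 0 ≤ θ) :
    MonotoneOn (fun t : ℝ => (1 + t) ^ θ) (Ici 0) :=
  fun s hs _ _ hst => rpow_le_rpow (by linarith [mem_Ici.1 hs]) (by linarith) hθ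

lemma mapsTo_one_add_rpow (hθ : 0 ≤ θ) :
    MapsTo (fun t : ℝ => (1 + t) ^ θ) (Ici 0) (Ici 1) :=
  fun t ht => one_le_rpow (by linarith [mem_Ici.1 ht]) hθ

end OneAddRpow

section DoMOT

variable {α β θ : ℝ}

lemma doMOT_alpha_one {t : ℝ} (ht : 1 + t ≠ 0) :
    doMOT 1 β θ t = doMOMobius β ((1 + t) ^ θ) := by
  rw [doMOT, doMOMobius, rpow_sub_one ht, one_rpow, add_comm t 1, div_mul_cancel₀ _ ht]

lemma doMOT_theta_one (α β t : ℝ) : doMOT α β 1 t = doMOMobius β ((1 + t) ^ (1 : ℝ)) := by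
  rw [doMOT, doMOMobius, sub_self, rpow_zero, rpow_one, rpow_one, rpow_one]
  ring_nf

lemma doMOT_eqOn_doMOMobius (hspec : α = 1 ∨ θ = 1) :
    EqOn (doMOT α β θ) (fun t => doMOMobius β ((1 + t) ^ θ)) (Ici 0) := by
  intro t ht
  rcases hspec with rfl | rfl
  · exact doMOT_alpha_one (by linarith [mem_Ici.1 ht])
  · exact doMOT_theta_one α β t

lemma doMOT_nonneg {t : ℝ} (hspec : α = 1 ∨ θ = 1) (hβ : 0 ≤ β) (hθ : 0 ≤ θ) (ht : 0 ≤ t) :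
    0 ≤ doMOT α β θ t := by
  rw [doMOT_eqOn_doMOMobius hspec ht]
  exact doMOMobius_nonneg hβ (mapsTo_one_add_rpow hθ ht)

lemma monotoneOn_doMOT (hspec : α = 1 ∨ θ = 1) (hβ : 0 ≤ β) (hβ1 : β ≤ 1) (hθ : 0 ≤ θ) :
    MonotoneOn (doMOT α β θ) (Ici 0) :=
  ((monotoneOn_doMOMobius hβ hβ1).comp (monotoneOn_one_add_rpow hθ)
    (mapsTo_one_add_rpow hθ)).congr (doMOT_eqOn_doMOMobius hspec).symm

lemma antitoneOn_doMOT (hspec : α = 1 ∨ θ = 1) (hβ : 1 ≤ β) (hθ : 0 ≤ θ) :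
    AntitoneOn (doMOT α β θ) (Ici 0) :=
  ((antitoneOn_doMOMobius hβ).comp_MonotoneOn (monotoneOn_one_add_rpow hθ)
    (mapsTo_one_add_rpow hθ)).congr (doMOT_eqOn_doMOMobius hspec).symm

end DoMOT

lemma antitone_mul_of_nonneg {ι : Type*} [Preorder ι] {f g : ι → ℝ} (hf : Antitone f)
    (hg : Antitone g) (hf₀ : ∀ x, 0 ≤ f x) (hg₀ : ∀ x, 0 ≤ g x) :
    Antitone fun x => f x * g x :=
  fun _ _ h => mul_le_mul (hf h) (hg h) (hg₀ _) (hf₀ _)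

theorem doMO_IHR_DHR_special_cases_general
    (α β θ : ℝ) (hβ : 0 < β) (hθ : 0 < θ)
    (hspec : α = 1 ∨ θ = 1)
    (Λ hF : ℝ → ℝ) (hΛ0 : ∀ x, 0 ≤ Λ x) (hΛmono : Monotone Λ)
    (hhF : ∀ x, 0 ≤ hF x) :
    (β ≤ 1 → Monotone hF →
      Monotone (fun x => β * θ * hF x *
        ((α + Λ x) ^ (θ - 1) * (Λ x + 1) /
          (1 + β * ((α + Λ x) ^ θ - α ^ θ))))) ∧
    (1 ≤ β → Antitone hF →
      Antitone (fun x => β * θ * hF x *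
        ((α + Λ x) ^ (θ - 1) * (Λ x + 1) /
          (1 + β * ((α + Λ x) ^ θ - α ^ θ))))) := by
  change (β ≤ 1 → Monotone hF → Monotone fun x => β * θ * hF x * doMOT α β θ (Λ x)) ∧
    (1 ≤ β → Antitone hF → Antitone fun x => β * θ * hF x * doMOT α β θ (Λ x))
  have hβθ : 0 ≤ β * θ := by positivity
  have hscaled_nonneg : ∀ x, 0 ≤ β * θ * hF x := fun x => mul_nonneg hβθ (hhF x)
  have hT_nonneg : ∀ x, 0 ≤ doMOT α β θ (Λ x) :=
    fun x => doMOT_nonneg hspec hβ.le hθ.le (hΛ0 x)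
  refine ⟨fun hβ1 hhF_mono => ?_, fun hβ1 hhF_anti => ?_⟩
  · have hT_mono : Monotone fun x => doMOT α β θ (Λ x) := fun x y hxy =>
      monotoneOn_doMOT hspec hβ.le hβ1 hθ.le (hΛ0 x) (hΛ0 y) (hΛmono hxy)
    exact (hhF_mono.const_mul hβθ).mul hT_mono hscaled_nonneg hT_nonneg
  · have hT_anti : Antitone fun x => doMOT α β θ (Λ x) := fun x y hxy =>
      antitoneOn_doMOT hspec hβ1 hθ.le (hΛ0 x) (hΛ0 y) (hΛmono hxy)
    exact antitone_mul_of_nonneg (hhF_anti.const_mul hβθ) hT_anti hscaled_nonneg hT_nonneg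

/-- Hazard rate monotonicity for the d-oMO model in the cases
`α = 1` or `θ = 1`.  The hazard rate of `G_{α,β,θ}` is
`h_G(x) = βθ h_F(x) T_{α,β,θ}(Λ_F(x))` with
`T_{α,β,θ}(t) = (α+t)^{θ-1}(t+1)/(1+β((α+t)^θ-α^θ))`.  If `α = 1` or `θ = 1`,
`0 < β ≤ 1` and `h_F` is nondecreasing, then `h_G` is nondecreasing; if
`α = 1` or `θ = 1`, `β ≥ 1` and `h_F` is nonincreasing, then `h_G` is
nonincreasing. -/
theorem doMO_IHR_DHR_special_cases
    (α β θ : ℝ) (hα : 0 ≤ α) (hβ : 0 < β) (hθ : 0 < θ)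
    (hspec : α = 1 ∨ θ = 1)
    (Λ hF : ℝ → ℝ) (hΛ0 : ∀ x, 0 ≤ Λ x) (hΛmono : Monotone Λ)
    (hhF : ∀ x, 0 ≤ hF x) :
    (β ≤ 1 → Monotone hF →
      Monotone (fun x => β * θ * hF x *
        ((α + Λ x) ^ (θ - 1) * (Λ x + 1) /
          (1 + β * ((α + Λ x) ^ θ - α ^ θ))))) ∧
    (1 ≤ β → Antitone hF →
      Antitone (fun x => β * θ * hF x *
        ((α + Λ x) ^ (θ - 1) * (Λ x + 1) /
          (1 + β * ((α + Λ x) ^ θ - α ^ θ))))) :=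
  doMO_IHR_DHR_special_cases_general α β θ hβ hθ hspec Λ hF hΛ0 hΛmono hhF
end

section
/- Let F be a distribution function on [0,∞) with nonnegative odds function Λ_F(x) = F(x)/(1 − F(x)), and let α ≥ 0, β, θ > 0. If Λ_F is convex on [0,∞) and θ ≥ 1, then the odds function of the d-oMO distribution, Λ_{G_{α,β,θ}}(x) = β((α + Λ_F(x))^θ − α^θ), is convex on [0,∞) (G_{α,β,θ} ∈ IOR). If Λ_F is concave on [0,∞) and θ ≤ 1, then Λ_{G_{α,β,θ}} is concave on [0,∞) (G_{α,β,θ} ∈ DOR). -/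
open Real Set

section

variable {E : Type*} [AddCommGroup E] [Module ℝ E] {s : Set E} {f : E → ℝ} {p : ℝ}

theorem ConvexOn.rpow (hf : ConvexOn ℝ s f) (hf₀ : ∀ x ∈ s, 0 ≤ f x) (hp : 1 ≤ p) :
    ConvexOn ℝ s fun x => f x ^ p := by
  refine ⟨hf.1, fun x hx y hy a b ha hb hab => ?_⟩
  calc f (a • x + b • y) ^ p ≤ (a • f x + b • f y) ^ p :=
        rpow_le_rpow (hf₀ _ (hf.1 hx hy ha hb hab)) (hf.2 hx hy ha hb hab) (by linarith)
    _ ≤ a • f x ^ p + b • f y ^ p := (convexOn_rpow hp).2 (hf₀ x hx) (hf₀ y hy) ha hb hab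

theorem ConcaveOn.rpow (hf : ConcaveOn ℝ s f) (hf₀ : ∀ x ∈ s, 0 ≤ f x) (hp₀ : 0 ≤ p)
    (hp₁ : p ≤ 1) : ConcaveOn ℝ s fun x => f x ^ p := by
  refine ⟨hf.1, fun x hx y hy a b ha hb hab => ?_⟩
  have hxy₀ : 0 ≤ a • f x + b • f y := by
    simp only [smul_eq_mul]; have := hf₀ x hx; have := hf₀ y hy; positivity
  calc a • f x ^ p + b • f y ^ p ≤ (a • f x + b • f y) ^ p :=
        (concaveOn_rpow hp₀ hp₁).2 (hf₀ x hx) (hf₀ y hy) ha hb hab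
    _ ≤ f (a • x + b • y) ^ p := rpow_le_rpow hxy₀ (hf.2 hx hy ha hb hab) hp₀

theorem ConvexOn.const_mul_sub_const {g : E → ℝ} (hg : ConvexOn ℝ s g) {β : ℝ} (hβ : 0 ≤ β)
    (c : ℝ) : ConvexOn ℝ s fun x => β * (g x - c) :=
  ((hg.smul hβ).add_const (-(β * c))).congr fun x _ => by
    simp only [Pi.add_apply, smul_eq_mul]; ring

theorem ConcaveOn.const_mul_sub_const {g : E → ℝ} (hg : ConcaveOn ℝ s g) {β : ℝ} (hβ : 0 ≤ β)
    (c : ℝ) : ConcaveOn ℝ s fun x => β * (g x - c) :=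
  ((hg.smul hβ).add_const (-(β * c))).congr fun x _ => by
    simp only [Pi.add_apply, smul_eq_mul]; ring

end

/-- Preservation of odds-rate monotonicity by the d-oMO model.
If the odds function `Λ_F` is nonnegative and convex on `[0,∞)` and `θ ≥ 1`,
then the odds function `x ↦ β((α + Λ_F(x))^θ - α^θ)` of `G_{α,β,θ}` is convex
on `[0,∞)`; if `Λ_F` is concave and `θ ≤ 1`, it is concave. -/
theorem doMO_IOR_DOR_preservation
    (α β θ : ℝ) (hα : 0 ≤ α) (hβ : 0 < β) (hθ : 0 < θ)
    (Λ : ℝ → ℝ) (hΛ0 : ∀ x ∈ Set.Ici (0 : ℝ), 0 ≤ Λ x) :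
    (ConvexOn ℝ (Set.Ici 0) Λ → 1 ≤ θ →
      ConvexOn ℝ (Set.Ici 0) (fun x => β * ((α + Λ x) ^ θ - α ^ θ))) ∧
    (ConcaveOn ℝ (Set.Ici 0) Λ → θ ≤ 1 →
      ConcaveOn ℝ (Set.Ici 0) (fun x => β * ((α + Λ x) ^ θ - α ^ θ))) := by
  have hshift₀ : ∀ x ∈ Ici (0 : ℝ), 0 ≤ α + Λ x := fun x hx => add_nonneg hα (hΛ0 x hx)
  refine ⟨fun hΛ hθ₁ => ?_, fun hΛ hθ₁ => ?_⟩
  · have hshift : ConvexOn ℝ (Ici 0) fun x => α + Λ x :=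
      (hΛ.add_const α).congr fun x _ => add_comm (Λ x) α
    exact (hshift.rpow hshift₀ hθ₁).const_mul_sub_const hβ.le _
  · have hshift : ConcaveOn ℝ (Ici 0) fun x => α + Λ x :=
      (hΛ.add_const α).congr fun x _ => add_comm (Λ x) α
    exact (hshift.rpow hshift₀ hθ.le hθ₁).const_mul_sub_const hβ.le _
end

section
/- Let α, β, θ > 0 and α₁, β₁, θ₁ > 0 satisfy condition (ST1): θ < θ₁, α^{θ−1}βθ < α₁^{θ₁−1}β₁θ₁, and α₁(1 − θ) − α(1 − θ₁) ≥ 0. Then for every x ≥ 0, 1 − K_{α,β,θ}(x) ≤ 1 − K_{α₁,β₁,θ₁}(x); that is, K_{α,β,θ} ≤_st K_{α₁,β₁,θ₁}. -/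
/-!
Write `1 - K_{α,β,θ}(x) = 1 / (1 + t)`, where `t ≥ 0` solves `x = G(t) := β ((t + α)^θ - α^θ)`.
The claim becomes `G ≤ G₁` on `[0, ∞)`, and since `G(0) = G₁(0) = 0` it suffices to compare
derivatives: `β θ (t + α)^(θ-1) ≤ β₁ θ₁ (t + α₁)^(θ₁-1)`. At `t = 0` this is (ST1b), and the
logarithm of the ratio of the right side to the left side is nondecreasing in `t` by (ST1a)
and (ST1c).
-/

open Real Set

lemma monotoneOn_Ici_of_hasDerivAt_nonneg {f f' : ℝ → ℝ} {a : ℝ}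
    (hf : ∀ t ∈ Ici a, HasDerivAt f (f' t) t) (hf' : ∀ t ∈ Ioi a, 0 ≤ f' t) :
    MonotoneOn f (Ici a) := by
  refine monotoneOn_of_hasDerivWithinAt_nonneg (convex_Ici a)
    (fun t ht ↦ (hf t ht).continuousAt.continuousWithinAt) ?_ (by rwa [interior_Ici])
  rw [interior_Ici]
  exact fun t ht ↦ (hf t (mem_Ici.2 (le_of_lt ht))).hasDerivWithinAt

namespace ELL

/-- `excess α β θ t` is the point `x` at which the survival function of `ELL(α,β,θ)`
equals `1 / (1 + t)`. -/
noncomputable def excess (α β θ t : ℝ) : ℝ := β * ((t + α) ^ θ - α ^ θ)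

lemma hasDerivAt_excess (α β θ : ℝ) {t : ℝ} (ht : 0 < t + α) :
    HasDerivAt (excess α β θ) (β * θ * (t + α) ^ (θ - 1)) t := by
  have h : HasDerivAt (fun y ↦ β * ((y + α) ^ θ - α ^ θ)) (β * (1 * θ * (t + α) ^ (θ - 1))) t :=
    ((((hasDerivAt_id t).add_const α).rpow_const (Or.inl ht.ne')).sub_const _).const_mul β
  exact h.congr_deriv (by ring)

lemma monotoneOn_log_ratio {α θ α₁ θ₁ : ℝ} (hα : 0 < α) (hα₁ : 0 < α₁) (hθ : θ ≤ θ₁)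
    (hc : 0 ≤ α₁ * (1 - θ) - α * (1 - θ₁)) :
    MonotoneOn (fun t ↦ (θ₁ - 1) * log (t + α₁) - (θ - 1) * log (t + α)) (Ici 0) := by
  refine monotoneOn_Ici_of_hasDerivAt_nonneg
    (f' := fun t ↦ (θ₁ - 1) / (t + α₁) - (θ - 1) / (t + α)) (fun t ht ↦ ?_) (fun t ht ↦ ?_)
  · have ht : (0 : ℝ) ≤ t := ht
    have h₁ : HasDerivAt (fun y ↦ (θ₁ - 1) * log (y + α₁)) ((θ₁ - 1) * (1 / (t + α₁))) t :=
      (((hasDerivAt_id t).add_const α₁).log (by positivity)).const_mul (θ₁ - 1)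
    have h : HasDerivAt (fun y ↦ (θ - 1) * log (y + α)) ((θ - 1) * (1 / (t + α))) t :=
      (((hasDerivAt_id t).add_const α).log (by positivity)).const_mul (θ - 1)
    exact (h₁.sub h).congr_deriv (by simp only [mul_one_div])
  · have ht : (0 : ℝ) < t := ht
    rw [sub_nonneg, div_le_div_iff₀ (by positivity) (by positivity)]
    -- `(θ₁ - 1)(t + α) - (θ - 1)(t + α₁) = (θ₁ - θ) t + (α₁(1 - θ) - α(1 - θ₁))`
    nlinarith

lemma rpow_sub_one_mul_le {α θ α₁ θ₁ : ℝ} (hα : 0 < α) (hα₁ : 0 < α₁) (hθ : θ ≤ θ₁)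
    (hc : 0 ≤ α₁ * (1 - θ) - α * (1 - θ₁)) {t : ℝ} (ht : 0 ≤ t) :
    α₁ ^ (θ₁ - 1) * (t + α) ^ (θ - 1) ≤ (t + α₁) ^ (θ₁ - 1) * α ^ (θ - 1) := by
  have hmono := monotoneOn_log_ratio hα hα₁ hθ hc self_mem_Ici (mem_Ici.2 ht) ht
  simp only [zero_add] at hmono
  rw [← log_le_log_iff (by positivity) (by positivity), log_mul (by positivity) (by positivity),
    log_mul (by positivity) (by positivity), log_rpow hα₁, log_rpow (by positivity),
    log_rpow (by positivity), log_rpow hα]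
  linarith

variable {α β θ α₁ β₁ θ₁ : ℝ}

lemma deriv_excess_le (hα : 0 < α) (hβ : 0 ≤ β) (hθ : 0 ≤ θ) (hα₁ : 0 < α₁)
    (hθθ₁ : θ ≤ θ₁) (hb : α ^ (θ - 1) * β * θ ≤ α₁ ^ (θ₁ - 1) * β₁ * θ₁)
    (hc : 0 ≤ α₁ * (1 - θ) - α * (1 - θ₁)) {t : ℝ} (ht : 0 ≤ t) :
    β * θ * (t + α) ^ (θ - 1) ≤ β₁ * θ₁ * (t + α₁) ^ (θ₁ - 1) := by
  have hcross := rpow_sub_one_mul_le hα hα₁ hθθ₁ hc ht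
  have hq : 0 ≤ (t + α₁) ^ (θ₁ - 1) := by positivity
  refine le_of_mul_le_mul_left ?_ (by positivity : 0 < α₁ ^ (θ₁ - 1))
  calc α₁ ^ (θ₁ - 1) * (β * θ * (t + α) ^ (θ - 1))
      = β * θ * (α₁ ^ (θ₁ - 1) * (t + α) ^ (θ - 1)) := by ring
    _ ≤ β * θ * ((t + α₁) ^ (θ₁ - 1) * α ^ (θ - 1)) := by gcongr
    _ = α ^ (θ - 1) * β * θ * (t + α₁) ^ (θ₁ - 1) := by ring
    _ ≤ α₁ ^ (θ₁ - 1) * β₁ * θ₁ * (t + α₁) ^ (θ₁ - 1) := by gcongr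
    _ = α₁ ^ (θ₁ - 1) * (β₁ * θ₁ * (t + α₁) ^ (θ₁ - 1)) := by ring

lemma excess_le_excess (hα : 0 < α) (hβ : 0 ≤ β) (hθ : 0 ≤ θ) (hα₁ : 0 < α₁)
    (hθθ₁ : θ ≤ θ₁) (hb : α ^ (θ - 1) * β * θ ≤ α₁ ^ (θ₁ - 1) * β₁ * θ₁)
    (hc : 0 ≤ α₁ * (1 - θ) - α * (1 - θ₁)) {t : ℝ} (ht : 0 ≤ t) :
    excess α β θ t ≤ excess α₁ β₁ θ₁ t := by
  have hmono : MonotoneOn (fun s ↦ excess α₁ β₁ θ₁ s - excess α β θ s) (Ici 0) :=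
    monotoneOn_Ici_of_hasDerivAt_nonneg
      (fun s hs ↦ (hasDerivAt_excess α₁ β₁ θ₁ (by linarith [mem_Ici.1 hs])).sub
        (hasDerivAt_excess α β θ (by linarith [mem_Ici.1 hs])))
      (fun s hs ↦ sub_nonneg.2 (deriv_excess_le hα hβ hθ hα₁ hθθ₁ hb hc (le_of_lt hs)))
  have h := hmono self_mem_Ici (mem_Ici.2 ht) ht
  simp only [excess, zero_add, sub_self, mul_zero] at h
  simp only [excess]
  linarith

lemma le_rpow_one_div (hα : 0 ≤ α) (hβ : 0 < β) (hθ : 0 < θ) {x : ℝ} (hx : 0 ≤ x) :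
    α ≤ (x / β + α ^ θ) ^ (1 / θ) := by
  rw [one_div, le_rpow_inv_iff_of_pos hα (by positivity) hθ]
  linarith [div_nonneg hx hβ.le]

lemma rpow_one_div_le_iff (hα : 0 ≤ α) (hβ : 0 < β) (hθ : 0 < θ) {x t : ℝ} (hx : 0 ≤ x)
    (ht : 0 ≤ t + α) :
    (x / β + α ^ θ) ^ (1 / θ) ≤ t + α ↔ x ≤ excess α β θ t := by
  rw [one_div, rpow_inv_le_iff_of_pos (by positivity) ht hθ, excess, ← div_le_iff₀' hβ]
  constructor <;> intro h <;> linarith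

lemma excess_rpow_one_div_sub (hα : 0 ≤ α) (hβ : 0 < β) (hθ : 0 < θ) {x : ℝ} (hx : 0 ≤ x) :
    excess α β θ ((x / β + α ^ θ) ^ (1 / θ) - α) = x := by
  rw [excess, sub_add_cancel, one_div, rpow_inv_rpow (by positivity) hθ.ne']
  field_simp
  ring

end ELL

open ELL in
/-- Under condition (ST1) — `θ < θ₁`,
`α^{θ-1}βθ < α₁^{θ₁-1}β₁θ₁` and `α₁(1-θ) - α(1-θ₁) ≥ 0` — the enlarged
log-logistic distributions satisfy `K_{α,β,θ} ≤_st K_{α₁,β₁,θ₁}`, i.e. the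
survival function of `K_{α,β,θ}` is pointwise below that of
`K_{α₁,β₁,θ₁}` on `[0,∞)`. -/
theorem ELL_st_order_ST1
    (α β θ α₁ β₁ θ₁ : ℝ)
    (hα : 0 < α) (hβ : 0 < β) (hθ : 0 < θ)
    (hα₁ : 0 < α₁) (hβ₁ : 0 < β₁) (hθ₁ : 0 < θ₁)
    (hST1a : θ < θ₁)
    (hST1b : α ^ (θ - 1) * β * θ < α₁ ^ (θ₁ - 1) * β₁ * θ₁)
    (hST1c : 0 ≤ α₁ * (1 - θ) - α * (1 - θ₁)) :
    ∀ x ≥ (0 : ℝ),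
      1 / ((x / β + α ^ θ) ^ (1 / θ) + 1 - α) ≤
        1 / ((x / β₁ + α₁ ^ θ₁) ^ (1 / θ₁) + 1 - α₁) := by
  intro x hx
  set t := (x / β + α ^ θ) ^ (1 / θ) - α
  have ht : 0 ≤ t := sub_nonneg.2 (le_rpow_one_div hα.le hβ hθ hx)
  have hx_le : x ≤ excess α₁ β₁ θ₁ t := by
    rw [← excess_rpow_one_div_sub hα.le hβ hθ hx]
    exact excess_le_excess hα hβ.le hθ.le hα₁ hST1a.le hST1b.le hST1c ht
  have hv_le := (rpow_one_div_le_iff hα₁.le hβ₁ hθ₁ hx (by linarith)).2 hx_le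
  have hv_ge := le_rpow_one_div hα₁.le hβ₁ hθ₁ hx
  apply one_div_le_one_div_of_le (by linarith)
  linarith
end

section
/- Let α, β, θ > 0 and α₁, β₁ > 0 satisfy condition (ST2): β < β₁, α^{θ−1}β < α₁^{θ−1}β₁, and (1 − θ)(α₁^θ β₁ − α^θ β) > 0. Then for every x ≥ 0, 1 − K_{α,β,θ}(x) ≤ 1 − K_{α₁,β₁,θ}(x); that is, K_{α,β,θ} ≤_st K_{α₁,β₁,θ}. -/
/-!
The inverse of `x ↦ (x / c + a ^ θ) ^ (1 / θ) - a` on `[0, ∞)` is `u ↦ c ((u + a) ^ θ - a ^ θ)`, so the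
stochastic order amounts to `β ((u + α) ^ θ - α ^ θ) ≤ β₁ ((u + α₁) ^ θ - α₁ ^ θ)` for `u ≥ 0`. Both
sides vanish at `0`, and their derivatives compare because
`c (u + a) ^ s = (c ^ (1/s) u + (c a ^ s) ^ (1/s)) ^ s` (with `s = θ - 1 ≠ 0`) is monotone in the pair
`(c, c a ^ s)`, and `β < β₁`, `α ^ (θ - 1) β < α₁ ^ (θ - 1) β₁` order these pairs.
-/

open Real Set

lemma mul_add_rpow_eq {a c s u : ℝ} (ha : 0 ≤ a) (hc : 0 ≤ c) (hu : 0 ≤ u) (hs : s ≠ 0) :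
    c * (u + a) ^ s = (c ^ s⁻¹ * u + (c * a ^ s) ^ s⁻¹) ^ s := by
  rw [mul_rpow hc (rpow_nonneg ha s), rpow_rpow_inv ha hs, ← mul_add,
    mul_rpow (rpow_nonneg hc _) (by positivity), rpow_inv_rpow hc hs]

lemma rpow_inv_mul_add_rpow_inv_rpow_le {c c' d d' s u : ℝ} (hc : 0 < c) (hd : 0 < d)
    (hcc' : c ≤ c') (hdd' : d ≤ d') (hu : 0 ≤ u) (hs : s ≠ 0) :
    (c ^ s⁻¹ * u + d ^ s⁻¹) ^ s ≤ (c' ^ s⁻¹ * u + d' ^ s⁻¹) ^ s := by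
  rcases hs.lt_or_gt with hs | hs
  · have hs' : s⁻¹ ≤ 0 := inv_nonpos.mpr hs.le
    have hc' : 0 < c' := hc.trans_le hcc'
    have hd' : 0 < d' := hd.trans_le hdd'
    refine rpow_le_rpow_of_nonpos (by positivity) ?_ hs.le
    gcongr ?_ * u + ?_
    · exact rpow_le_rpow_of_nonpos hc hcc' hs'
    · exact rpow_le_rpow_of_nonpos hd hdd' hs'
  · gcongr

lemma mul_add_rpow_le {a a' c c' s u : ℝ} (ha : 0 < a) (ha' : 0 ≤ a') (hc : 0 < c)
    (hcc' : c ≤ c') (hca : c * a ^ s ≤ c' * a' ^ s) (hu : 0 ≤ u) :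
    c * (u + a) ^ s ≤ c' * (u + a') ^ s := by
  rcases eq_or_ne s 0 with rfl | hs
  · simpa using hcc'
  rw [mul_add_rpow_eq ha.le hc.le hu hs, mul_add_rpow_eq ha' (hc.trans_le hcc').le hu hs]
  exact rpow_inv_mul_add_rpow_inv_rpow_le hc (by positivity) hcc' hca hu hs

lemma hasDerivAt_mul_add_rpow_sub {a c θ u : ℝ} (h : 0 < u + a) :
    HasDerivAt (fun t => c * ((t + a) ^ θ - a ^ θ)) (θ * (c * (u + a) ^ (θ - 1))) u := by
  refine (((((hasDerivAt_id' u).add_const a).rpow_const (Or.inl h.ne')).sub_const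
    (a ^ θ)).const_mul c).congr_deriv ?_
  ring

lemma mul_add_rpow_sub_le {a a' c c' θ u : ℝ} (ha : 0 < a) (ha' : 0 < a') (hc : 0 < c)
    (hθ : 0 ≤ θ) (hcc' : c ≤ c') (hca : c * a ^ (θ - 1) ≤ c' * a' ^ (θ - 1)) (hu : 0 ≤ u) :
    c * ((u + a) ^ θ - a ^ θ) ≤ c' * ((u + a') ^ θ - a' ^ θ) := by
  set g := fun t => c' * ((t + a') ^ θ - a' ^ θ) - c * ((t + a) ^ θ - a ^ θ)
  have hg : ∀ t ∈ Ici (0 : ℝ), HasDerivAt g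
      (θ * (c' * (t + a') ^ (θ - 1)) - θ * (c * (t + a) ^ (θ - 1))) t := fun t ht =>
    (hasDerivAt_mul_add_rpow_sub (by linarith [mem_Ici.mp ht])).sub
      (hasDerivAt_mul_add_rpow_sub (by linarith [mem_Ici.mp ht]))
  have hmono : MonotoneOn g (Ici 0) := by
    refine monotoneOn_of_hasDerivWithinAt_nonneg (convex_Ici 0)
      (fun t ht => (hg t ht).continuousAt.continuousWithinAt)
      (fun t ht => (hg t (interior_subset ht)).hasDerivWithinAt) fun t ht => ?_
    have ht : 0 ≤ t := interior_subset (s := Ici (0 : ℝ)) ht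
    rw [sub_nonneg]
    exact mul_le_mul_of_nonneg_left (mul_add_rpow_le ha ha'.le hc hcc' hca ht) hθ
  have := hmono self_mem_Ici hu hu
  simp only [g, zero_add, sub_self, mul_zero] at this
  linarith

theorem ELL_st_order_ST2_general
    (α β θ α₁ β₁ : ℝ)
    (hα : 0 < α) (hβ : 0 < β) (hθ : 0 < θ)
    (hα₁ : 0 < α₁) (hβ₁ : 0 < β₁)
    (hST2a : β < β₁)
    (hST2b : α ^ (θ - 1) * β < α₁ ^ (θ - 1) * β₁) :
    ∀ x ≥ (0 : ℝ),
      1 / ((x / β + α ^ θ) ^ (1 / θ) + 1 - α) ≤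
        1 / ((x / β₁ + α₁ ^ θ) ^ (1 / θ) + 1 - α₁) := by
  intro x hx
  rw [one_div θ]
  set u := (x / β₁ + α₁ ^ θ) ^ θ⁻¹ - α₁
  have hu : 0 ≤ u := by
    rw [sub_nonneg, le_rpow_inv_iff_of_pos hα₁.le (by positivity) hθ]
    linarith [div_nonneg hx hβ₁.le]
  have hx_eq : x = β₁ * ((u + α₁) ^ θ - α₁ ^ θ) := by
    rw [sub_add_cancel, rpow_inv_rpow (by positivity) hθ.ne']
    field_simp
    ring
  have hcomp : β * ((u + α) ^ θ - α ^ θ) ≤ x := hx_eq ▸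
    mul_add_rpow_sub_le hα hα₁ hβ hθ.le hST2a.le (by linarith) hu
  have hα_le : u + α ≤ (x / β + α ^ θ) ^ θ⁻¹ := by
    rw [le_rpow_inv_iff_of_pos (by positivity) (by positivity) hθ, ← sub_le_iff_le_add,
      le_div_iff₀ hβ]
    linarith
  apply one_div_le_one_div_of_le (by linarith)
  linarith

/-- Under condition (ST2) — equal shape `θ`, `β < β₁`,
`α^{θ-1}β < α₁^{θ-1}β₁` and `(1-θ)(α₁^θ β₁ - α^θ β) > 0` — the enlarged
log-logistic distributions satisfy `K_{α,β,θ} ≤_st K_{α₁,β₁,θ}`. -/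
theorem ELL_st_order_ST2
    (α β θ α₁ β₁ : ℝ)
    (hα : 0 < α) (hβ : 0 < β) (hθ : 0 < θ)
    (hα₁ : 0 < α₁) (hβ₁ : 0 < β₁)
    (hST2a : β < β₁)
    (hST2b : α ^ (θ - 1) * β < α₁ ^ (θ - 1) * β₁)
    (hST2c : 0 < (1 - θ) * (α₁ ^ θ * β₁ - α ^ θ * β)) :
    ∀ x ≥ (0 : ℝ),
      1 / ((x / β + α ^ θ) ^ (1 / θ) + 1 - α) ≤
        1 / ((x / β₁ + α₁ ^ θ) ^ (1 / θ) + 1 - α₁) :=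
  ELL_st_order_ST2_general α β θ α₁ β₁ hα hβ hθ hα₁ hβ₁ hST2a hST2b
end

section
/- For the enlarged log-logistic distributions the following stochastic order relations hold: (1) if α ≥ α₁ ≥ 0 and 0 < θ ≤ 1, then for every β > 0 and every x ≥ 0, 1 − K_{α,β,θ}(x) ≤ 1 − K_{α₁,β,θ}(x), i.e. K_{α,β,θ} ≤_st K_{α₁,β,θ}; (2) if 0 < β ≤ β₁ and 0 < θ ≤ 1, then for every α ≥ 0 and every x ≥ 0, 1 − K_{α,β,θ}(x) ≤ 1 − K_{α,β₁,θ}(x), i.e. K_{α,β,θ} ≤_st K_{α,β₁,θ}; (3) if α > 0, 0 < θ < θ₁ ≤ 1, α^{θ₁−θ} > θ/θ₁, and (1 − θ)/(α^θ θ) > (1 − θ₁)/(α^{θ₁} θ₁), then for every β > 0 and every x ≥ 0, 1 − K_{α,β,θ}(x) ≤ 1 − K_{α,β,θ₁}(x), i.e. K_{α,β,θ} ≤_st K_{α,β,θ₁}. -/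
/-!
With `c = x / β`, the survival function is `1 / D` for the denominator
`D = (c + α^θ)^(1/θ) + 1 - α ≥ 1`, so every comparison reduces to comparing denominators.
In `α`, put `y = α^θ` and `p = 1/θ ≥ 1`: then `D - 1 = (c + y)^p - y^p` is increasing in `y`
because `t ↦ t^p` is convex. In `β`, `D` is decreasing in `β` through `c`. In `θ`, put
`r = θ₁/θ ≥ 1` and `s = α^θ`: Bernoulli's inequality gives `(s + c)^r ≥ s^r + r s^(r-1) c`, and
the hypothesis `α^(θ₁-θ) > θ/θ₁` says exactly `r s^(r-1) ≥ 1`, whence `(c + α^θ₁)^(1/θ₁) ≤ (c + α^θ)^(1/θ)`.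
-/

open Real Set

theorem ConvexOn.add_sub_le_add_sub {𝕜 : Type*} [Field 𝕜] [LinearOrder 𝕜]
    [IsStrictOrderedRing 𝕜] {s : Set 𝕜} {f : 𝕜 → 𝕜} (hf : ConvexOn 𝕜 s f) {a b c : 𝕜}
    (ha : a ∈ s) (hac : a + c ∈ s) (hb : b ∈ s) (hbc : b + c ∈ s) (hab : a ≤ b) (hc : 0 ≤ c) :
    f (a + c) - f a ≤ f (b + c) - f b := by
  rcases hc.eq_or_lt with rfl | hc
  · simp
  have hleft : (f (a + c) - f a) / c ≤ (f (b + c) - f a) / (b + c - a) := by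
    simpa using hf.secant_mono ha hac hbc (by simpa using hc.ne') (by linarith) (by linarith)
  have hright : (f (b + c) - f a) / (b + c - a) ≤ (f (b + c) - f b) / c := by
    have := hf.secant_mono hbc ha hb (by linarith) (by simpa using hc.ne') hab
    rwa [← neg_div_neg_eq, ← neg_div_neg_eq (f b - _), neg_sub, neg_sub, neg_sub, neg_sub,
      add_sub_cancel_left] at this
  exact (div_le_div_iff_of_pos_right hc).1 (hleft.trans hright)

theorem rpow_add_mul_rpow_sub_one_le_rpow_add {r s c : ℝ} (hr : 1 ≤ r) (hs : 0 < s)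
    (hc : -s ≤ c) : s ^ r + r * s ^ (r - 1) * c ≤ (s + c) ^ r := by
  have hcs : -1 ≤ c / s := by rwa [le_div_iff₀ hs, neg_one_mul]
  calc s ^ r + r * s ^ (r - 1) * c = s ^ r * (1 + r * (c / s)) := by
        rw [rpow_sub hs, rpow_one]; field_simp
    _ ≤ s ^ r * (1 + c / s) ^ r := by gcongr; exact one_add_mul_self_le_rpow_one_add hcs hr
    _ = (s + c) ^ r := by
        rw [← mul_rpow hs.le (by linarith)]
        congr 1; field_simp

/-- `1 - K_{α,β,θ}(x) = 1 / ellDenom α θ (x / β)`. -/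
noncomputable def ellDenom (α θ c : ℝ) : ℝ := (c + α ^ θ) ^ (1 / θ) + 1 - α

theorem rpow_rpow_one_div {α θ : ℝ} (hα : 0 ≤ α) (hθ : 0 < θ) : (α ^ θ) ^ (1 / θ) = α := by
  rw [one_div, rpow_rpow_inv hα hθ.ne']

theorem one_le_ellDenom {α θ c : ℝ} (hα : 0 ≤ α) (hθ : 0 < θ) (hc : 0 ≤ c) :
    1 ≤ ellDenom α θ c := by
  have : α ≤ (c + α ^ θ) ^ (1 / θ) := calc
    α = (α ^ θ) ^ (1 / θ) := (rpow_rpow_one_div hα hθ).symm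
    _ ≤ (c + α ^ θ) ^ (1 / θ) := by gcongr; linarith
  unfold ellDenom
  linarith

theorem ellDenom_le_ellDenom_of_alpha_le {α α₁ θ c : ℝ} (hα₁ : 0 ≤ α₁) (hα₁α : α₁ ≤ α)
    (hθ : 0 < θ) (hθ1 : θ ≤ 1) (hc : 0 ≤ c) : ellDenom α₁ θ c ≤ ellDenom α θ c := by
  have hp : 1 ≤ 1 / θ := by rwa [le_div_iff₀ hθ, one_mul]
  have hα₁θ : 0 ≤ α₁ ^ θ := rpow_nonneg hα₁ θ
  have hαθ : 0 ≤ α ^ θ := rpow_nonneg (hα₁.trans hα₁α) θ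
  have := (convexOn_rpow hp).add_sub_le_add_sub (c := c) (mem_Ici.2 hα₁θ)
    (mem_Ici.2 (by linarith)) (mem_Ici.2 hαθ) (mem_Ici.2 (by linarith))
    (rpow_le_rpow hα₁ hα₁α hθ.le) hc
  simp only [rpow_rpow_one_div hα₁ hθ, rpow_rpow_one_div (hα₁.trans hα₁α) hθ] at this
  rw [add_comm (α₁ ^ θ), add_comm (α ^ θ)] at this
  unfold ellDenom
  linarith

theorem ellDenom_le_ellDenom_of_le {α θ c c' : ℝ} (hα : 0 ≤ α) (hθ : 0 < θ) (hc : 0 ≤ c)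
    (hcc' : c ≤ c') : ellDenom α θ c ≤ ellDenom α θ c' := by
  have := rpow_nonneg hα θ
  unfold ellDenom
  gcongr

theorem ellDenom_le_ellDenom_of_theta_le {α θ θ₁ c : ℝ} (hα : 0 < α) (hθ : 0 < θ)
    (hθθ₁ : θ ≤ θ₁) (hslope : θ / θ₁ ≤ α ^ (θ₁ - θ)) (hc : 0 ≤ c) :
    ellDenom α θ₁ c ≤ ellDenom α θ c := by
  obtain ⟨r, hr_def⟩ : ∃ r, r = θ₁ / θ := ⟨_, rfl⟩
  have hθr : θ * r = θ₁ := by rw [hr_def]; field_simp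
  have hθ₁ : 0 < θ₁ := hθ.trans_le hθθ₁
  set s := α ^ θ
  have hs : 0 < s := rpow_pos_of_pos hα θ
  have hr : 1 ≤ r := hr_def ▸ (one_le_div hθ).2 hθθ₁
  have hsr : s ^ r = α ^ θ₁ := by rw [← rpow_mul hα.le, hθr]
  have hr_slope : 1 ≤ r * s ^ (r - 1) := by
    rw [← rpow_mul hα.le, show θ * (r - 1) = θ₁ - θ by linarith]
    calc 1 = r * (θ / θ₁) := by rw [hr_def]; field_simp
      _ ≤ r * α ^ (θ₁ - θ) := by gcongr
  have htangent := rpow_add_mul_rpow_sub_one_le_rpow_add hr hs (by linarith : -s ≤ c)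
  have hroot : (c + α ^ θ₁) ^ (1 / θ₁) ≤ (c + s) ^ (1 / θ) := calc
    (c + α ^ θ₁) ^ (1 / θ₁) ≤ ((c + s) ^ r) ^ (1 / θ₁) := by
      gcongr
      rw [add_comm c s, ← hsr]
      linarith [le_mul_of_one_le_left hc hr_slope]
    _ = (c + s) ^ (1 / θ) := by
      rw [← rpow_mul (by positivity), ← hθr]; congr 1; field_simp
  unfold ellDenom
  linarith

/-- One-parameter `≤_st` comparisons within the enlarged
log-logistic family `K_{α,β,θ}(x) = 1 - 1/((x/β + α^θ)^{1/θ} + 1 - α)`: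
(1) if `α ≥ α₁ ≥ 0` and `θ ≤ 1` then `K_{α,β,θ} ≤_st K_{α₁,β,θ}`;
(2) if `β ≤ β₁` and `θ ≤ 1` then `K_{α,β,θ} ≤_st K_{α,β₁,θ}`;
(3) if `θ < θ₁ ≤ 1`, `α^{θ₁-θ} > θ/θ₁` and
`(1-θ)/(α^θ θ) > (1-θ₁)/(α^{θ₁} θ₁)` then `K_{α,β,θ} ≤_st K_{α,β,θ₁}`. -/
theorem ELL_st_order_one_parameter :
    (∀ α α₁ β θ : ℝ, 0 ≤ α₁ → α₁ ≤ α → 0 < β → 0 < θ → θ ≤ 1 →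
      ∀ x ≥ (0 : ℝ),
        1 / ((x / β + α ^ θ) ^ (1 / θ) + 1 - α) ≤
          1 / ((x / β + α₁ ^ θ) ^ (1 / θ) + 1 - α₁)) ∧
    (∀ α β β₁ θ : ℝ, 0 ≤ α → 0 < β → β ≤ β₁ → 0 < θ → θ ≤ 1 →
      ∀ x ≥ (0 : ℝ),
        1 / ((x / β + α ^ θ) ^ (1 / θ) + 1 - α) ≤
          1 / ((x / β₁ + α ^ θ) ^ (1 / θ) + 1 - α)) ∧
    (∀ α β θ θ₁ : ℝ, 0 < α → 0 < β → 0 < θ → θ < θ₁ → θ₁ ≤ 1 →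
      θ / θ₁ < α ^ (θ₁ - θ) →
      (1 - θ₁) / (α ^ θ₁ * θ₁) < (1 - θ) / (α ^ θ * θ) →
      ∀ x ≥ (0 : ℝ),
        1 / ((x / β + α ^ θ) ^ (1 / θ) + 1 - α) ≤
          1 / ((x / β + α ^ θ₁) ^ (1 / θ₁) + 1 - α)) := by
  refine ⟨?_, ?_, ?_⟩
  · intro α α₁ β θ hα₁ hα₁α hβ hθ hθ1 x hx
    have hc : 0 ≤ x / β := div_nonneg hx hβ.le
    exact one_div_le_one_div_of_le (one_pos.trans_le (one_le_ellDenom hα₁ hθ hc))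
      (ellDenom_le_ellDenom_of_alpha_le hα₁ hα₁α hθ hθ1 hc)
  · intro α β β₁ θ hα hβ hββ₁ hθ _ x hx
    have hc₁ : 0 ≤ x / β₁ := div_nonneg hx (hβ.trans_le hββ₁).le
    exact one_div_le_one_div_of_le (one_pos.trans_le (one_le_ellDenom hα hθ hc₁))
      (ellDenom_le_ellDenom_of_le hα hθ hc₁ (div_le_div_of_nonneg_left hx hβ hββ₁))
  · intro α β θ θ₁ hα hβ hθ hθθ₁ _ hslope _ x hx
    have hc : 0 ≤ x / β := div_nonneg hx hβ.le
    exact one_div_le_one_div_of_le (one_pos.trans_le (one_le_ellDenom hα.le (hθ.trans hθθ₁) hc))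
      (ellDenom_le_ellDenom_of_theta_le hα hθ hθθ₁.le hslope.le hc)
end

section
/- Let α, β, θ > 0 and α₁, β₁, θ₁ > 0 satisfy: (HR1) βθα^{θ−1} ≤ β₁θ₁α₁^{θ₁−1} and βθα^θ ≤ β₁θ₁α₁^{θ₁}; (HR2) θ < θ₁; (HR3) (1 − α₁)(θ₁ − 1) ≥ 0; (HR4) (1/α − 1)(θ − 1) ≤ (1/α₁ − 1)(θ₁ − 1). Then for every x ≥ 0, h_{α,β,θ}(x) ≥ h_{α₁,β₁,θ₁}(x); that is, K_{α,β,θ} ≤_hr K_{α₁,β₁,θ₁}. -/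
/-!
Writing `u = x / β + α ^ θ`, the hazard rate is the reciprocal of
`r(x) = β θ (u + (1 - α) u ^ (1 - 1/θ))`, so it suffices to show `r ≤ r₁` on `[0, ∞)`.
At `x = 0` this is the first half of (HR1), since `r(0) = β θ α ^ (θ - 1)`. The derivatives are
`r' = θ + (1 - α)(θ - 1) / u ^ (1/θ)`, and `r' ≤ r₁'` follows from (HR2)–(HR4) once one knows
`α u₁ ^ (1/θ₁) ≤ α₁ u ^ (1/θ)`; the latter is Bernoulli's inequality, the second half of (HR1)
and (HR2).
-/

open Real Set

namespace EnlargedLogLogistic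

noncomputable def base (α β θ x : ℝ) : ℝ := x / β + α ^ θ

noncomputable def hazard (α β θ x : ℝ) : ℝ :=
  base α β θ x ^ (1 / θ - 1) / (β * θ * (base α β θ x ^ (1 / θ) + 1 - α))

noncomputable def invHazard (α β θ x : ℝ) : ℝ :=
  β * θ * (base α β θ x + (1 - α) * base α β θ x ^ (1 - 1 / θ))

section

variable {α β θ x : ℝ}

lemma base_pos (hα : 0 < α) (hβ : 0 < β) (hx : 0 ≤ x) : 0 < base α β θ x := by
  unfold base; positivity

lemma base_rpow_one_div (hα : 0 < α) (hβ : 0 < β) (hθ : θ ≠ 0) (hx : 0 ≤ x) :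
    base α β θ x ^ (1 / θ) = α * (1 + x / (β * α ^ θ)) ^ (1 / θ) := by
  have hαθ : 0 < α ^ θ := rpow_pos_of_pos hα θ
  have hfactor : base α β θ x = α ^ θ * (1 + x / (β * α ^ θ)) := by
    unfold base; field_simp; ring
  rw [hfactor, mul_rpow hαθ.le (by positivity), one_div, rpow_rpow_inv hα.le hθ]

lemma le_base_rpow_one_div (hα : 0 < α) (hβ : 0 < β) (hθ : 0 < θ) (hx : 0 ≤ x) :
    α ≤ base α β θ x ^ (1 / θ) := by
  rw [base_rpow_one_div hα hβ hθ.ne' hx]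
  refine le_mul_of_one_le_right hα.le (one_le_rpow ?_ (by positivity))
  have : 0 ≤ x / (β * α ^ θ) := by positivity
  linarith

lemma invHazard_eq (hu : 0 < base α β θ x) :
    invHazard α β θ x =
      β * θ * (base α β θ x ^ (1 / θ) + 1 - α) * base α β θ x ^ (1 - 1 / θ) := by
  have hsplit : base α β θ x ^ (1 / θ) * base α β θ x ^ (1 - 1 / θ) = base α β θ x := by
    rw [← rpow_add hu]; norm_num
  unfold invHazard
  linear_combination (-(β * θ)) * hsplit

lemma hazard_eq_inv_invHazard (hu : 0 < base α β θ x) :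
    hazard α β θ x = (invHazard α β θ x)⁻¹ := by
  rw [invHazard_eq hu, hazard, mul_inv, ← rpow_neg hu.le, neg_sub, div_eq_mul_inv, mul_comm]

lemma invHazard_pos (hα : 0 < α) (hβ : 0 < β) (hθ : 0 < θ) (hx : 0 ≤ x) :
    0 < invHazard α β θ x := by
  have hu := base_pos (θ := θ) hα hβ hx
  have hα_le := le_base_rpow_one_div hα hβ hθ hx
  rw [invHazard_eq hu]
  have : 0 < base α β θ x ^ (1 / θ) + 1 - α := by linarith
  positivity

lemma invHazard_zero (hα : 0 < α) (hθ : θ ≠ 0) : invHazard α β θ 0 = β * θ * α ^ (θ - 1) := by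
  have hpow : (α ^ θ) ^ (1 - 1 / θ) = α ^ (θ - 1) := by
    rw [← rpow_mul hα.le]; congr 1; field_simp
  have hsucc : α ^ θ = α ^ (θ - 1) * α := by
    rw [rpow_sub_one hα.ne', div_mul_cancel₀ _ hα.ne']
  simp only [invHazard, base, zero_div, zero_add, hpow]
  rw [hsucc]
  ring

lemma hasDerivAt_invHazard (hβ : β ≠ 0) (hθ : θ ≠ 0) (hu : 0 < base α β θ x) :
    HasDerivAt (invHazard α β θ)
      (θ + (1 - α) * (θ - 1) * (base α β θ x ^ (1 / θ))⁻¹) x := by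
  have hbase : HasDerivAt (base α β θ) (1 / β) x := by
    exact ((hasDerivAt_id x).div_const β).add_const (α ^ θ)
  have hpow := hbase.rpow_const (p := 1 - 1 / θ) (Or.inl hu.ne')
  refine ((hbase.add (hpow.const_mul (1 - α))).const_mul (β * θ)).congr_deriv ?_
  rw [show (1 : ℝ) - 1 / θ - 1 = -(1 / θ) by ring, rpow_neg hu.le]
  field_simp

end

lemma one_add_rpow_one_div_le {θ θ₁ z z₁ : ℝ} (hθ : 0 < θ) (hθθ₁ : θ ≤ θ₁) (hz : 0 ≤ z)
    (hz₁ : 0 ≤ z₁) (h : θ * z₁ ≤ θ₁ * z) :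
    (1 + z₁) ^ (1 / θ₁) ≤ (1 + z) ^ (1 / θ) := by
  have hθ₁ : 0 < θ₁ := hθ.trans_le hθθ₁
  have hbernoulli : 1 + z₁ ≤ (1 + z) ^ (θ₁ / θ) :=
    calc 1 + z₁ ≤ 1 + θ₁ / θ * z := by
          have : z₁ ≤ θ₁ * z / θ := by rw [le_div_iff₀ hθ]; linarith
          rw [div_mul_eq_mul_div]; linarith
      _ ≤ (1 + z) ^ (θ₁ / θ) :=
          one_add_mul_self_le_rpow_one_add (by linarith) (by rwa [le_div_iff₀ hθ, one_mul])
  calc (1 + z₁) ^ (1 / θ₁) ≤ ((1 + z) ^ (θ₁ / θ)) ^ (1 / θ₁) :=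
        rpow_le_rpow (by positivity) hbernoulli (by positivity)
    _ = (1 + z) ^ (1 / θ) := by
        rw [← rpow_mul (by positivity)]; congr 1; field_simp

lemma mul_inv_le_mul_inv_of_div_le_div {a a₁ c c₁ s t : ℝ} (ha : 0 < a) (ha₁ : 0 < a₁)
    (hs : 0 < s) (ht : 0 < t) (hc₁ : 0 ≤ c₁) (hst : a * s ≤ a₁ * t) (hc : c / a ≤ c₁ / a₁) :
    c * t⁻¹ ≤ c₁ * s⁻¹ := by
  have hts : a / t ≤ a₁ / s := by rwa [div_le_div_iff₀ ht hs]
  calc c * t⁻¹ = c / a * (a / t) := by rw [div_mul_div_cancel₀ ha.ne', div_eq_mul_inv]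
    _ ≤ c₁ / a₁ * (a / t) := by gcongr
    _ ≤ c₁ / a₁ * (a₁ / s) := by gcongr
    _ = c₁ * s⁻¹ := by rw [div_mul_div_cancel₀ ha₁.ne', div_eq_mul_inv]

lemma le_of_hasDerivAt_le_of_le {f g f' g' : ℝ → ℝ} {a x : ℝ}
    (hf : ∀ y ≥ a, HasDerivAt f (f' y) y) (hg : ∀ y ≥ a, HasDerivAt g (g' y) y)
    (hfg' : ∀ y > a, f' y ≤ g' y) (ha : f a ≤ g a) (hx : a ≤ x) : f x ≤ g x := by
  have hmono : MonotoneOn (g - f) (Ici a) := by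
    refine monotoneOn_of_hasDerivWithinAt_nonneg (convex_Ici a) (f' := g' - f')
      (fun y hy => ((hg y hy).sub (hf y hy)).continuousAt.continuousWithinAt)
      (fun y hy => ?_) (fun y hy => ?_)
    · rw [interior_Ici] at hy
      exact ((hg y (le_of_lt hy)).sub (hf y (le_of_lt hy))).hasDerivWithinAt
    · rw [interior_Ici] at hy
      exact sub_nonneg.2 (hfg' y hy)
  have := hmono self_mem_Ici hx hx
  simp only [Pi.sub_apply] at this
  linarith

section

variable {α β θ α₁ β₁ θ₁ x : ℝ}

lemma mul_base_rpow_one_div_le (hα : 0 < α) (hβ : 0 < β) (hθ : 0 < θ) (hα₁ : 0 < α₁)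
    (hβ₁ : 0 < β₁) (hθθ₁ : θ ≤ θ₁) (hHR1b : β * θ * α ^ θ ≤ β₁ * θ₁ * α₁ ^ θ₁) (hx : 0 ≤ x) :
    α * base α₁ β₁ θ₁ x ^ (1 / θ₁) ≤ α₁ * base α β θ x ^ (1 / θ) := by
  have hαθ : 0 < α ^ θ := rpow_pos_of_pos hα θ
  have hα₁θ₁ : 0 < α₁ ^ θ₁ := rpow_pos_of_pos hα₁ θ₁
  have hscale : θ * (x / (β₁ * α₁ ^ θ₁)) ≤ θ₁ * (x / (β * α ^ θ)) := by
    rw [mul_div_assoc', mul_div_assoc', div_le_div_iff₀ (by positivity) (by positivity)]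
    nlinarith [mul_le_mul_of_nonneg_left hHR1b hx]
  rw [base_rpow_one_div hα₁ hβ₁ (hθ.trans_le hθθ₁).ne' hx, base_rpow_one_div hα hβ hθ.ne' hx,
    mul_left_comm]
  gcongr
  exact one_add_rpow_one_div_le hθ hθθ₁ (by positivity) (by positivity) hscale

lemma deriv_invHazard_le (hα : 0 < α) (hβ : 0 < β) (hθ : 0 < θ) (hα₁ : 0 < α₁)
    (hβ₁ : 0 < β₁) (hHR1b : β * θ * α ^ θ ≤ β₁ * θ₁ * α₁ ^ θ₁) (hHR2 : θ < θ₁)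
    (hHR3 : 0 ≤ (1 - α₁) * (θ₁ - 1))
    (hHR4 : (1 / α - 1) * (θ - 1) ≤ (1 / α₁ - 1) * (θ₁ - 1)) (hx : 0 ≤ x) :
    θ + (1 - α) * (θ - 1) * (base α β θ x ^ (1 / θ))⁻¹ ≤
      θ₁ + (1 - α₁) * (θ₁ - 1) * (base α₁ β₁ θ₁ x ^ (1 / θ₁))⁻¹ := by
  have hHR4' : (1 - α) * (θ - 1) / α ≤ (1 - α₁) * (θ₁ - 1) / α₁ := by
    convert hHR4 using 1 <;> field_simp
  refine add_le_add hHR2.le (mul_inv_le_mul_inv_of_div_le_div hα hα₁ ?_ ?_ hHR3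
    (mul_base_rpow_one_div_le hα hβ hθ hα₁ hβ₁ hHR2.le hHR1b hx) hHR4')
  · exact rpow_pos_of_pos (base_pos hα₁ hβ₁ hx) _
  · exact rpow_pos_of_pos (base_pos hα hβ hx) _

end

end EnlargedLogLogistic

open EnlargedLogLogistic

/-- Under conditions (HR1)–(HR4), the enlarged log-logistic
distributions satisfy `K_{α,β,θ} ≤_hr K_{α₁,β₁,θ₁}`: the hazard rate
`h_{α,β,θ}(x) = (x/β + α^θ)^{1/θ-1}/(βθ((x/β + α^θ)^{1/θ} + 1 - α))`
dominates `h_{α₁,β₁,θ₁}(x)` pointwise on `[0,∞)`. -/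
theorem ELL_hr_order
    (α β θ α₁ β₁ θ₁ : ℝ)
    (hα : 0 < α) (hβ : 0 < β) (hθ : 0 < θ)
    (hα₁ : 0 < α₁) (hβ₁ : 0 < β₁) (hθ₁ : 0 < θ₁)
    (hHR1a : β * θ * α ^ (θ - 1) ≤ β₁ * θ₁ * α₁ ^ (θ₁ - 1))
    (hHR1b : β * θ * α ^ θ ≤ β₁ * θ₁ * α₁ ^ θ₁)
    (hHR2 : θ < θ₁)
    (hHR3 : 0 ≤ (1 - α₁) * (θ₁ - 1))
    (hHR4 : (1 / α - 1) * (θ - 1) ≤ (1 / α₁ - 1) * (θ₁ - 1)) :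
    ∀ x ≥ (0 : ℝ),
      (x / β₁ + α₁ ^ θ₁) ^ (1 / θ₁ - 1) /
          (β₁ * θ₁ * ((x / β₁ + α₁ ^ θ₁) ^ (1 / θ₁) + 1 - α₁)) ≤
        (x / β + α ^ θ) ^ (1 / θ - 1) /
          (β * θ * ((x / β + α ^ θ) ^ (1 / θ) + 1 - α)) := by
  intro x hx
  change hazard α₁ β₁ θ₁ x ≤ hazard α β θ x
  rw [hazard_eq_inv_invHazard (base_pos hα₁ hβ₁ hx), hazard_eq_inv_invHazard (base_pos hα hβ hx)]
  refine inv_anti₀ (invHazard_pos hα hβ hθ hx) (le_of_hasDerivAt_le_of_le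
    (fun y hy => hasDerivAt_invHazard hβ.ne' hθ.ne' (base_pos hα hβ hy))
    (fun y hy => hasDerivAt_invHazard hβ₁.ne' hθ₁.ne' (base_pos hα₁ hβ₁ hy))
    (fun y hy => deriv_invHazard_le hα hβ hθ hα₁ hβ₁ hHR1b hHR2 hHR3 hHR4 hy.le) ?_ hx)
  rwa [invHazard_zero hα hθ.ne', invHazard_zero hα₁ hθ₁.ne']
end

section
/- Let α, α₁ ≥ 0 and β, β₁, θ, θ₁ > 0, and define ψ(x) = β₁(((x/β + α^θ)^{1/θ} + α₁ − α)^{θ₁} − α₁^{θ₁}) for x ≥ 0, which equals K_{α₁,β₁,θ₁}^{-1} ∘ K_{α,β,θ}(x). If θ ≤ θ₁ and α(θ₁ − 1) + α₁(1 − θ) ≥ 0, then ψ is convex on [0,∞), i.e. K_{α,β,θ} ≤_c K_{α₁,β₁,θ₁}. If θ ≥ θ₁ and α(θ₁ − 1) + α₁(1 − θ) ≤ 0, then ψ is concave on [0,∞), i.e. K_{α₁,β₁,θ₁} ≤_c K_{α,β,θ}. -/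
/-!
With `g y = (y ^ (1 / θ) + α₁ - α) ^ θ₁` we have `ψ x = β₁ * (g (x / β + α ^ θ) - α₁ ^ θ₁)`, and an
increasing affine change of variable followed by a positive rescaling preserves convexity, so it
suffices to study `g` on `[α ^ θ, ∞)`. With `t = y ^ (1 / θ) ≥ α`, `g'' y` is a positive multiple of
`(θ₁ - θ) * t + (1 - θ) * (α₁ - α) = (θ₁ - θ) * (t - α) + (α * (θ₁ - 1) + α₁ * (1 - θ))`,
whose sign is fixed by the two hypotheses.
-/

open Real Set

namespace Real

variable {p q c y : ℝ}

theorem hasDerivAt_rpow_add_const_rpow (hy : 0 < y) (hyc : 0 < y ^ p + c) :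
    HasDerivAt (fun y => (y ^ p + c) ^ q) (q * p * y ^ (p - 1) * (y ^ p + c) ^ (q - 1)) y := by
  convert ((hasDerivAt_rpow_const (Or.inl hy.ne')).add_const c).rpow_const (p := q)
    (Or.inl hyc.ne') using 1
  ring

theorem hasDerivAt_deriv_rpow_add_const_rpow (hy : 0 < y) (hyc : 0 < y ^ p + c) :
    HasDerivAt (fun y => q * p * y ^ (p - 1) * (y ^ p + c) ^ (q - 1))
      (q * p * y ^ (p - 2) * (y ^ p + c) ^ (q - 2) *
        ((p - 1) * (y ^ p + c) + (q - 1) * p * y ^ p)) y := by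
  have hy' : y ^ (p - 1) * y ^ (p - 1) = y ^ (p - 2) * y ^ p := by
    rw [← rpow_add hy, ← rpow_add hy]; ring_nf
  have hyc' : (y ^ p + c) ^ (q - 1) = (y ^ p + c) ^ (q - 2) * (y ^ p + c) := by
    rw [← rpow_add_one hyc.ne']; ring_nf
  have hyp : y ^ (p - 1 - 1) = y ^ (p - 2) := by ring_nf
  have hycq : (y ^ p + c) ^ (q - 1 - 1) = (y ^ p + c) ^ (q - 2) := by ring_nf
  have h : HasDerivAt (fun y => q * p * (y ^ (p - 1) * (y ^ p + c) ^ (q - 1)))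
      (q * p * ((p - 1) * y ^ (p - 1 - 1) * (y ^ p + c) ^ (q - 1) +
        y ^ (p - 1) * ((q - 1) * p * y ^ (p - 1) * (y ^ p + c) ^ (q - 1 - 1)))) y :=
    ((hasDerivAt_rpow_const (Or.inl hy.ne')).mul
      (hasDerivAt_rpow_add_const_rpow hy hyc)).const_mul (q * p)
  convert h using 1
  · funext y; ring
  rw [hyp, hycq, hyc']
  linear_combination (-q * p * (q - 1) * p * (y ^ p + c) ^ (q - 2)) * hy'

theorem continuous_rpow_add_const_rpow (hp : 0 ≤ p) (hq : 0 ≤ q) :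
    Continuous fun y => (y ^ p + c) ^ q :=
  (continuous_rpow_const hq).comp ((continuous_rpow_const hp).add continuous_const)

theorem rpow_add_const_pos_of_lt {a : ℝ} (ha : 0 ≤ a) (hp : 0 < p) (hac : 0 ≤ a ^ p + c)
    (hy : a < y) : 0 < y ^ p + c := by
  linarith [rpow_lt_rpow ha hy hp]

theorem convexOn_rpow_add_const_rpow {a : ℝ} (ha : 0 ≤ a) (hp : 0 < p) (hq : 0 ≤ q)
    (hac : 0 ≤ a ^ p + c) (h : ∀ y, a < y → 0 ≤ (p - 1) * (y ^ p + c) + (q - 1) * p * y ^ p) :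
    ConvexOn ℝ (Ici a) fun y => (y ^ p + c) ^ q := by
  have hint : ∀ y ∈ interior (Ici a), a < y := by simp
  refine convexOn_of_hasDerivWithinAt2_nonneg (convex_Ici a)
    (continuous_rpow_add_const_rpow hp.le hq).continuousOn
    (fun y hy => (hasDerivAt_rpow_add_const_rpow (ha.trans_lt (hint y hy))
      (rpow_add_const_pos_of_lt ha hp hac (hint y hy))).hasDerivWithinAt)
    (fun y hy => (hasDerivAt_deriv_rpow_add_const_rpow (ha.trans_lt (hint y hy))
      (rpow_add_const_pos_of_lt ha hp hac (hint y hy))).hasDerivWithinAt)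
    fun y hy => ?_
  replace hy := hint y hy
  have := ha.trans_lt hy
  have := rpow_add_const_pos_of_lt ha hp hac hy
  exact mul_nonneg (by positivity) (h y hy)

theorem concaveOn_rpow_add_const_rpow {a : ℝ} (ha : 0 ≤ a) (hp : 0 < p) (hq : 0 ≤ q)
    (hac : 0 ≤ a ^ p + c) (h : ∀ y, a < y → (p - 1) * (y ^ p + c) + (q - 1) * p * y ^ p ≤ 0) :
    ConcaveOn ℝ (Ici a) fun y => (y ^ p + c) ^ q := by
  have hint : ∀ y ∈ interior (Ici a), a < y := by simp
  refine concaveOn_of_hasDerivWithinAt2_nonpos (convex_Ici a)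
    (continuous_rpow_add_const_rpow hp.le hq).continuousOn
    (fun y hy => (hasDerivAt_rpow_add_const_rpow (ha.trans_lt (hint y hy))
      (rpow_add_const_pos_of_lt ha hp hac (hint y hy))).hasDerivWithinAt)
    (fun y hy => (hasDerivAt_deriv_rpow_add_const_rpow (ha.trans_lt (hint y hy))
      (rpow_add_const_pos_of_lt ha hp hac (hint y hy))).hasDerivWithinAt)
    fun y hy => ?_
  replace hy := hint y hy
  have := ha.trans_lt hy
  have := rpow_add_const_pos_of_lt ha hp hac hy
  exact mul_nonpos_of_nonneg_of_nonpos (by positivity) (h y hy)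

theorem lt_rpow_one_div_of_rpow_lt {a y θ : ℝ} (ha : 0 ≤ a) (hθ : 0 < θ) (h : a ^ θ < y) :
    a < y ^ (1 / θ) := by
  rw [one_div]
  exact (lt_rpow_inv_iff_of_pos ha ((rpow_nonneg ha θ).trans h.le) hθ).2 h

end Real

section AffineReparametrization

variable {f : ℝ → ℝ} {b d k e : ℝ}

noncomputable def divAddConst (b d : ℝ) : ℝ →ᵃ[ℝ] ℝ where
  toFun x := x / b + d
  linear := b⁻¹ • LinearMap.id
  map_vadd' x v := by
    simp only [vadd_eq_add, LinearMap.smul_apply, LinearMap.id_apply, smul_eq_mul]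
    ring

theorem preimage_divAddConst_Ici (hb : 0 < b) : divAddConst b d ⁻¹' Ici d = Ici 0 := by
  ext x
  simp [divAddConst, le_div_iff₀ hb]

theorem ConvexOn.mul_comp_div_add_sub (hk : 0 ≤ k) (hb : 0 < b) (hf : ConvexOn ℝ (Ici d) f) :
    ConvexOn ℝ (Ici 0) fun x => k * (f (x / b + d) - e) := by
  have h := ((hf.comp_affineMap (divAddConst b d)).smul hk).add_const (-(k * e))
  rw [preimage_divAddConst_Ici hb] at h
  refine h.congr fun x _ => ?_
  simp only [Pi.add_apply, Function.comp_apply, smul_eq_mul, divAddConst, AffineMap.coe_mk]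
  ring

theorem ConcaveOn.mul_comp_div_add_sub (hk : 0 ≤ k) (hb : 0 < b) (hf : ConcaveOn ℝ (Ici d) f) :
    ConcaveOn ℝ (Ici 0) fun x => k * (f (x / b + d) - e) := by
  have h := ((hf.comp_affineMap (divAddConst b d)).smul hk).add_const (-(k * e))
  rw [preimage_divAddConst_Ici hb] at h
  refine h.congr fun x _ => ?_
  simp only [Pi.add_apply, Function.comp_apply, smul_eq_mul, divAddConst, AffineMap.coe_mk]
  ring

end AffineReparametrization

theorem ell_deriv2_factor_eq {α α₁ θ θ₁ t : ℝ} (hθ : θ ≠ 0) :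
    (1 / θ - 1) * (t + (α₁ - α)) + (θ₁ - 1) * (1 / θ) * t =
      ((θ₁ - θ) * (t - α) + (α * (θ₁ - 1) + α₁ * (1 - θ))) / θ := by
  field_simp
  ring

/-- Convex transform order within the enlarged log-logistic
family.  With `ψ = K_{α₁,β₁,θ₁}⁻¹ ∘ K_{α,β,θ}`, i.e.
`ψ(x) = β₁(((x/β + α^θ)^{1/θ} + α₁ - α)^{θ₁} - α₁^{θ₁})`: if `θ ≤ θ₁` and
`α(θ₁-1) + α₁(1-θ) ≥ 0` then `ψ` is convex on `[0,∞)`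
(`K_{α,β,θ} ≤_c K_{α₁,β₁,θ₁}`); if `θ ≥ θ₁` and `α(θ₁-1) + α₁(1-θ) ≤ 0`
then `ψ` is concave on `[0,∞)` (`K_{α₁,β₁,θ₁} ≤_c K_{α,β,θ}`). -/
theorem ELL_convex_transform_order
    (α α₁ : ℝ) (hα : 0 ≤ α) (hα₁ : 0 ≤ α₁)
    (β β₁ θ θ₁ : ℝ) (hβ : 0 < β) (hβ₁ : 0 < β₁) (hθ : 0 < θ) (hθ₁ : 0 < θ₁) :
    (θ ≤ θ₁ → 0 ≤ α * (θ₁ - 1) + α₁ * (1 - θ) →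
      ConvexOn ℝ (Set.Ici 0) (fun x : ℝ =>
        β₁ * (((x / β + α ^ θ) ^ (1 / θ) + α₁ - α) ^ θ₁ - α₁ ^ θ₁))) ∧
    (θ₁ ≤ θ → α * (θ₁ - 1) + α₁ * (1 - θ) ≤ 0 →
      ConcaveOn ℝ (Set.Ici 0) (fun x : ℝ =>
        β₁ * (((x / β + α ^ θ) ^ (1 / θ) + α₁ - α) ^ θ₁ - α₁ ^ θ₁))) := by
  have hac : 0 ≤ (α ^ θ) ^ (1 / θ) + (α₁ - α) := by
    rw [one_div, rpow_rpow_inv hα hθ.ne']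
    linarith
  have hα_lt : ∀ y, α ^ θ < y → α < y ^ (1 / θ) := fun y => lt_rpow_one_div_of_rpow_lt hα hθ
  constructor
  · intro hθθ₁ hmix
    refine ConvexOn.mul_comp_div_add_sub (f := fun y => (y ^ (1 / θ) + α₁ - α) ^ θ₁) hβ₁.le hβ ?_
    simp only [add_sub_assoc]
    refine convexOn_rpow_add_const_rpow (rpow_nonneg hα θ) (one_div_pos.2 hθ) hθ₁.le hac
      fun y hy => ?_
    rw [ell_deriv2_factor_eq hθ.ne']
    have := mul_nonneg (sub_nonneg.2 hθθ₁) (sub_nonneg.2 (hα_lt y hy).le)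
    exact div_nonneg (add_nonneg this hmix) hθ.le
  · intro hθ₁θ hmix
    refine ConcaveOn.mul_comp_div_add_sub (f := fun y => (y ^ (1 / θ) + α₁ - α) ^ θ₁) hβ₁.le hβ ?_
    simp only [add_sub_assoc]
    refine concaveOn_rpow_add_const_rpow (rpow_nonneg hα θ) (one_div_pos.2 hθ) hθ₁.le hac
      fun y hy => ?_
    rw [ell_deriv2_factor_eq hθ.ne']
    have := mul_nonpos_of_nonpos_of_nonneg (sub_nonpos.2 hθ₁θ) (sub_nonneg.2 (hα_lt y hy).le)
    exact div_nonpos_of_nonpos_of_nonneg (add_nonpos this hmix) hθ.le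
end
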